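/- arXiv:1310.0618 — 12 statements merged into one kernel-verified Lean document; each statement's English description precedes it below -/
import Mathlib

section
/- The map ι : R → R fixing A pointwise and sending every element of R \ A to its inverse is a group automorphism of R. -/
open scoped Classical

/-- The map `ι : R → R` fixing `A` pointwise and sending every element of
`R \ A` to its inverse is a group automorphism of the generalised dicyclic
group `R = Dic(A,y,x)`. -/
theorem stmt1 {R : Type*} [Group R] [Fintype R] (A : Subgroup R) (y x : R)
    (hAcomm : ∀ a ∈ A, ∀ b ∈ A, a * b = b * a)
    (hexp : ∃ a ∈ A, a ^ 2 ≠ 1)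
    (hy : y ∈ A) (hy2 : y ^ 2 = 1) (hy1 : y ≠ 1)
    (hx : x ∉ A) (hx2 : x ^ 2 = y)
    (hconj : ∀ a ∈ A, x⁻¹ * a * x = a⁻¹)
    (hAind : A.index = 2) :
    ∃ ι : R ≃* R, ∀ r : R, ι r = if r ∈ A then r else r⁻¹ := by
  have hmem : ∀ r s : R, r * s ∈ A ↔ (r ∈ A ↔ s ∈ A) := fun r s =>
    Subgroup.mul_mem_iff_of_index_two hAind
  have hinvmem : ∀ r : R, r⁻¹ ∈ A ↔ r ∈ A := fun r => A.inv_mem_iff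
  have hxinv : x⁻¹ ∉ A := fun h => hx ((hinvmem x).mp h)
  -- conjugation by any element outside A inverts A
  have hconj' : ∀ g : R, g ∉ A → ∀ a ∈ A, g⁻¹ * a * g = a⁻¹ := by
    intro g hg a ha
    have hb : g * x⁻¹ ∈ A := (hmem g x⁻¹).mpr (by simp [hg, hxinv])
    set b := g * x⁻¹ with hbdef
    have hgeq : g = b * x := by rw [hbdef]; group
    have hbconj : b⁻¹ * a * b = a := by
      have hc := hAcomm a ha b hb
      calc b⁻¹ * a * b = b⁻¹ * (a * b) := by group
        _ = b⁻¹ * (b * a) := by rw [hc]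
        _ = a := by group
    calc g⁻¹ * a * g = x⁻¹ * (b⁻¹ * a * b) * x := by rw [hgeq]; group
      _ = x⁻¹ * a * x := by rw [hbconj]
      _ = a⁻¹ := hconj a ha
  -- every element outside A squares to y
  have hsq : ∀ g : R, g ∉ A → g * g = y := by
    intro g hg
    have hb : g * x⁻¹ ∈ A := (hmem g x⁻¹).mpr (by simp [hg, hxinv])
    set b := g * x⁻¹ with hbdef
    have hgeq : g = b * x := by rw [hbdef]; group
    have hxb : x * b * x⁻¹ = b⁻¹ := by
      have h1 : x⁻¹ * b⁻¹ * x = b⁻¹⁻¹ := hconj b⁻¹ (A.inv_mem hb)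
      have h2 : x⁻¹ * b⁻¹ * x = b := by rw [h1, inv_inv]
      calc x * b * x⁻¹ = x * (x⁻¹ * b⁻¹ * x) * x⁻¹ := by rw [h2]
        _ = b⁻¹ := by group
    calc g * g = b * (x * b * x⁻¹) * (x * x) := by rw [hgeq]; group
      _ = b * b⁻¹ * (x * x) := by rw [hxb]
      _ = x * x := by group
      _ = y := by rw [← hx2, pow_two]
  -- the map
  set f : R → R := fun r => if r ∈ A then r else r⁻¹ with hfdef
  have hinvol : Function.Involutive f := by
    intro r
    by_cases h : r ∈ A
    · simp [f, h]
    · have h' : r⁻¹ ∉ A := fun hc => h ((hinvmem r).mp hc)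
      simp [f, h, h']
  have hmul : ∀ r s : R, f (r * s) = f r * f s := by
    intro r s
    by_cases hr : r ∈ A <;> by_cases hs : s ∈ A
    · have : r * s ∈ A := A.mul_mem hr hs
      simp [f, hr, hs, this]
    · have hrs : r * s ∉ A := fun h => hs (by
        have := (hmem r s).mp h
        exact this.mp hr)
      simp only [f, if_pos hr, if_neg hs, if_neg hrs]
      -- need (r*s)⁻¹ = r * s⁻¹
      have h1 : s⁻¹ * r⁻¹ * s = r := by
        have := hconj' s hs r⁻¹ (A.inv_mem hr)
        rw [this, inv_inv]
      calc (r * s)⁻¹ = (s⁻¹ * r⁻¹ * s) * s⁻¹ * s * s⁻¹ := by group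
        _ = r * s⁻¹ * s * s⁻¹ := by rw [h1]
        _ = r * s⁻¹ := by group
    · have hrs : r * s ∉ A := fun h => hr (((hmem r s).mp h).mpr hs)
      simp only [f, if_neg hr, if_pos hs, if_neg hrs]
      -- need (r*s)⁻¹ = r⁻¹ * s
      have hr' : r⁻¹ ∉ A := fun hc => hr ((hinvmem r).mp hc)
      have h1 : r * s⁻¹ * r⁻¹ = s := by
        have h2 := hconj' r⁻¹ hr' s⁻¹ (A.inv_mem hs)
        rw [inv_inv, inv_inv] at h2
        exact h2
      calc (r * s)⁻¹ = r⁻¹ * (r * s⁻¹ * r⁻¹) := by group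
        _ = r⁻¹ * s := by rw [h1]
    · have hrs : r * s ∈ A := (hmem r s).mpr (by simp [hr, hs])
      simp only [f, if_neg hr, if_neg hs, if_pos hrs]
      have hry : r⁻¹ = y⁻¹ * r := by rw [← hsq r hr]; group
      have hsy : s⁻¹ = y⁻¹ * s := by rw [← hsq s hs]; group
      have h := hconj' r hr y⁻¹ (A.inv_mem hy)
      rw [inv_inv] at h
      have hyc : y⁻¹ * r = r * y := by
        calc y⁻¹ * r = r * (r⁻¹ * y⁻¹ * r) := by group
          _ = r * y := by rw [h]
      calc r * s = (r * y) * (y⁻¹ * s) := by group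
        _ = (y⁻¹ * r) * (y⁻¹ * s) := by rw [hyc]
        _ = r⁻¹ * s⁻¹ := by rw [← hry, ← hsy]
  exact ⟨{ toEquiv := hinvol.toPerm f, map_mul' := hmul }, fun r => rfl⟩
end

section
/- In a generalised dicyclic group R = Dic(A,y,x), the subgroup ⟨y⟩ is characteristic in R. -/
theorem aux_fix {R : Type*} [Group R] [Fintype R] (A : Subgroup R) (y x : R)
    (hy : y ∈ A) (hy2 : y ^ 2 = 1) (hy1 : y ≠ 1)
    (hx : x ∉ A) (hx2 : x ^ 2 = y)
    (hconj : ∀ a ∈ A, x⁻¹ * a * x = a⁻¹)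
    (hAind : A.index = 2) (φ : R ≃* R) : φ y = y := by
  classical
  -- every element outside A squares to y
  have hsq : ∀ g : R, g ∉ A → g ^ 2 = y := by
    intro g hg
    have hgx : g * x ∈ A := by
      rw [Subgroup.mul_mem_iff_of_index_two hAind]
      simp [hg, hx]
    have h1 : x⁻¹ * (g * x) * x = (g * x)⁻¹ := hconj _ hgx
    have hyy : y * y = 1 := by rw [← pow_two]; exact hy2
    have hyinv : y⁻¹ = y := inv_eq_of_mul_eq_one_right hyy |>.trans rfl |>.symm ▸ (inv_eq_of_mul_eq_one_left hyy)
    have hxg : x⁻¹ * (g * x) = (g * x)⁻¹ * x⁻¹ := by rw [← h1]; group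
    have e : g * g = (g * x) * ((g * x)⁻¹ * x⁻¹) * x⁻¹ := by rw [← hxg]; group
    have e2 : g ^ 2 = x⁻¹ * x⁻¹ := by rw [pow_two, e]; group
    rw [e2, ← mul_inv_rev, ← pow_two, hx2, hyinv]
  by_contra hne
  -- counting argument
  set Sy : Finset R := Finset.univ.filter (fun g => g ^ 2 = y) with hSy
  set S' : Finset R := Finset.univ.filter (fun g => g ^ 2 = φ y) with hS'
  have hdisj : Disjoint Sy S' := by
    rw [Finset.disjoint_filter]
    intro g _ h1 h2
    exact hne (h2.symm.trans h1)
  have hmaps : ∀ g ∈ Sy, φ g ∈ S' := by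
    intro g hg
    rw [hSy, Finset.mem_filter] at hg
    rw [hS', Finset.mem_filter]
    exact ⟨Finset.mem_univ _, by rw [← map_pow, hg.2]⟩
  have hcard : Sy.card ≤ S'.card :=
    Finset.card_le_card_of_injOn φ hmaps (φ.injective.injOn)
  have hsub : Finset.univ.filter (fun g => g ∉ A) ⊆ Sy := by
    intro g hg
    rw [Finset.mem_filter] at hg
    rw [hSy, Finset.mem_filter]
    exact ⟨Finset.mem_univ _, hsq g hg.2⟩
  -- cardinalities
  have hcompl : (Finset.univ.filter (fun g => g ∉ A)).card
      = Fintype.card R - (Finset.univ.filter (fun g => g ∈ A)).card := by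
    rw [Finset.filter_not, Finset.card_sdiff_of_subset (Finset.filter_subset _ _)]
    simp
  have hAcard : (Finset.univ.filter (fun g => g ∈ A)).card * 2 = Fintype.card R := by
    have := Subgroup.card_mul_index A
    rw [hAind, Nat.card_eq_fintype_card, Nat.card_eq_fintype_card] at this
    rw [← this, Fintype.card_subtype]
  have hunion : Fintype.card R ≤ (Sy ∪ S').card := by
    rw [Finset.card_union_of_disjoint hdisj]
    have h1 : Fintype.card R - (Finset.univ.filter (fun g => g ∈ A)).card ≤ Sy.card := by
      rw [← hcompl]; exact Finset.card_le_card hsub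
    omega
  have hall : (Sy ∪ S') = Finset.univ :=
    Finset.eq_univ_of_card _ (le_antisymm (Finset.card_le_univ _) (by simpa using hunion))
  have h1 : (1 : R) ∈ Sy ∪ S' := hall ▸ Finset.mem_univ 1
  rw [Finset.mem_union, hSy, hS', Finset.mem_filter, Finset.mem_filter, one_pow] at h1
  rcases h1 with ⟨_, h⟩ | ⟨_, h⟩
  · exact hy1 h.symm
  · exact hy1 (φ.injective (by rw [← h, map_one]))

/-- In a generalised dicyclic group `R = Dic(A,y,x)`, the subgroup `⟨y⟩` is
characteristic in `R`. -/
theorem stmt2 {R : Type*} [Group R] [Fintype R] (A : Subgroup R) (y x : R)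
    (hAcomm : ∀ a ∈ A, ∀ b ∈ A, a * b = b * a)
    (hexp : ∃ a ∈ A, a ^ 2 ≠ 1)
    (hy : y ∈ A) (hy2 : y ^ 2 = 1) (hy1 : y ≠ 1)
    (hx : x ∉ A) (hx2 : x ^ 2 = y)
    (hconj : ∀ a ∈ A, x⁻¹ * a * x = a⁻¹)
    (hAind : A.index = 2) :
    (Subgroup.zpowers y).Characteristic := by
  have key : ∀ φ : R ≃* R, φ y = y := fun φ =>
    aux_fix A y x hy hy2 hy1 hx hx2 hconj hAind φ
  constructor
  intro φ
  ext g
  simp only [Subgroup.mem_comap, MulEquiv.coe_toMonoidHom, Subgroup.mem_zpowers_iff]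
  constructor
  · rintro ⟨k, hk⟩
    exact ⟨k, φ.injective (by rw [map_zpow, key φ, hk])⟩
  · rintro ⟨k, hk⟩
    exact ⟨k, by rw [← hk, map_zpow, key φ]⟩
end

section
/- Every subgroup of a generalised dicyclic group is either abelian or generalised dicyclic. -/
/-- A group is generalised dicyclic if it contains an abelian subgroup `A` of
index 2 of exponent greater than 2, an involution `y ∈ A` and an element
`x ∉ A` with `x ^ 2 = y` inverting `A` by conjugation. -/
def IsGenDicyclic (G : Type*) [Group G] : Prop :=
  ∃ (A : Subgroup G) (y x : G),
    (∀ a ∈ A, ∀ b ∈ A, a * b = b * a) ∧ (∃ a ∈ A, a ^ 2 ≠ 1) ∧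
    y ∈ A ∧ y ^ 2 = 1 ∧ y ≠ 1 ∧ x ∉ A ∧ x ^ 2 = y ∧
    (∀ a ∈ A, x⁻¹ * a * x = a⁻¹) ∧ A.index = 2

/-- Every subgroup of a generalised dicyclic group is either abelian or
generalised dicyclic. -/
theorem stmt3 {R : Type*} [Group R] [Fintype R] (hR : IsGenDicyclic R)
    (H : Subgroup R) :
    (∀ a b : H, a * b = b * a) ∨ IsGenDicyclic H := by
  classical
  obtain ⟨A, y, x, hab, -, hyA, hy2, hy1, hxA, hx2, hconj, hAidx⟩ := hR
  -- product of two elements outside A lies in A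
  have hmul : ∀ g h : R, g ∉ A → h ∉ A → g * h ∈ A := by
    intro g h hg hh
    rw [Subgroup.mul_mem_iff_of_index_two hAidx]
    simp [hg, hh]
  -- x * a = a⁻¹ * x for a ∈ A
  have hxa : ∀ a ∈ A, x * a = a⁻¹ * x := by
    intro a ha
    have h := hconj a⁻¹ (inv_mem ha)
    rw [inv_inv] at h
    calc x * a = x * (x⁻¹ * a⁻¹ * x) := by rw [h]
    _ = a⁻¹ * x := by group
  -- every element outside A squares to y
  have hsq : ∀ g : R, g ∉ A → g ^ 2 = y := by
    intro g hg
    have hgx : g * x⁻¹ ∈ A := hmul g x⁻¹ hg (fun h => hxA (by simpa using inv_mem h))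
    have : g = (g * x⁻¹) * x := by group
    rw [this]
    calc (g * x⁻¹ * x) ^ 2 = (g * x⁻¹) * (x * (g * x⁻¹)) * x := by rw [pow_two]; group
    _ = (g * x⁻¹) * ((g * x⁻¹)⁻¹ * x) * x := by rw [hxa _ hgx]
    _ = x ^ 2 := by rw [pow_two]; group
    _ = y := hx2
  -- conjugation by any element outside A inverts A
  have hinv : ∀ g : R, g ∉ A → ∀ b ∈ A, g⁻¹ * b * g = b⁻¹ := by
    intro g hg b hb
    have hgx : g * x⁻¹ ∈ A := hmul g x⁻¹ hg (fun h => hxA (by simpa using inv_mem h))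
    have hg' : g = (g * x⁻¹) * x := by group
    have hcomm : (g * x⁻¹) * b = b * (g * x⁻¹) := hab _ hgx _ hb
    calc g⁻¹ * b * g = x⁻¹ * ((g * x⁻¹)⁻¹ * b * (g * x⁻¹)) * x := by
          rw [hg']; group
    _ = x⁻¹ * b * x := by rw [show (g * x⁻¹)⁻¹ * b * (g * x⁻¹) = b by
          rw [mul_assoc, ← hcomm]; group]
    _ = b⁻¹ := hconj b hb
  by_cases hHA : ∀ h : R, h ∈ H → h ∈ A
  · -- H ≤ A, abelian
    left
    intro a b
    exact Subtype.ext (hab a (hHA a a.2) b (hHA b b.2))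
  push_neg at hHA
  obtain ⟨t, htH, htA⟩ := hHA
  have hyH : y ∈ H := by rw [← hsq t htA]; exact pow_mem htH 2
  by_cases hexp : ∃ b : R, b ∈ A ∧ b ∈ H ∧ b ^ 2 ≠ 1
  · -- generalised dicyclic
    right
    refine ⟨A.subgroupOf H, ⟨y, hyH⟩, ⟨t, htH⟩, ?_, ?_, ?_, ?_, ?_, ?_, ?_, ?_, ?_⟩
    · intro a ha b hb
      exact Subtype.ext (hab a ha b hb)
    · obtain ⟨b, hbA, hbH, hb2⟩ := hexp
      exact ⟨⟨b, hbH⟩, hbA, fun h => hb2 (by simpa using congrArg Subtype.val h)⟩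
    · exact hyA
    · exact Subtype.ext (by simpa using hy2)
    · exact fun h => hy1 (by simpa using congrArg Subtype.val h)
    · exact htA
    · exact Subtype.ext (by simpa using hsq t htA)
    · intro a ha
      exact Subtype.ext (by simpa using hinv t htA a ha)
    · rw [Subgroup.index_eq_two_iff]
      refine ⟨⟨t, htH⟩, fun b => ?_⟩
      by_cases hb : (b : R) ∈ A
      · right
        refine ⟨hb, fun h => ?_⟩
        have : (b : R) * t ∈ A := h
        exact htA (by simpa using mul_mem (inv_mem hb) this)
      · left
        exact ⟨hmul b t hb htA, hb⟩
  · -- abelian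
    push_neg at hexp
    left
    -- every element of H ∩ A has square 1, hence is central in H
    have hc : ∀ g : R, g ∈ A → g ∈ H → ∀ h : R, h ∈ H → g * h = h * g := by
      intro g hgA hgH h hhH
      by_cases hhA : h ∈ A
      · exact hab g hgA h hhA
      · have hg2 : g ^ 2 = 1 := hexp g hgA hgH
        have hginv : g⁻¹ = g := by
          rw [← mul_left_cancel_iff (a := g), mul_inv_cancel, ← pow_two, hg2]
        calc g * h = h * (h⁻¹ * g * h) := by group
        _ = h * g⁻¹ := by rw [hinv h hhA g hgA]
        _ = h * g := by rw [hginv]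
    intro a b
    apply Subtype.ext
    show (a : R) * b = b * a
    by_cases haA : (a : R) ∈ A
    · exact hc a haA a.2 b b.2
    · by_cases hbA : (b : R) ∈ A
      · exact (hc b hbA b.2 a a.2).symm
      · have hcA : (a : R)⁻¹ * b ∈ A :=
          hmul _ _ (fun h => haA (by simpa using inv_mem h)) hbA
        have hcH : (a : R)⁻¹ * b ∈ H := mul_mem (inv_mem a.2) b.2
        set c : R := (a : R)⁻¹ * b with hc_def
        have hb' : (b : R) = a * c := by rw [hc_def]; group
        have hc2 : c ^ 2 = 1 := hexp c hcA hcH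
        have hcinv : c⁻¹ = c := by
          rw [← mul_left_cancel_iff (a := c), mul_inv_cancel, ← pow_two, hc2]
        calc (a : R) * b = a * (a * c) := by rw [hb']
        _ = a ^ 2 * c := by rw [pow_two]; group
        _ = a ^ 2 * c⁻¹ := by rw [hcinv]
        _ = a * (a * ((a : R)⁻¹ * c * a)) := by rw [hinv a haA c hcA, pow_two]; group
        _ = (a * c) * a := by group
        _ = b * a := by rw [hb']
end

section
/- The generalised dicyclic group Dic(A,y,x) is isomorphic to Q₈ × C₂^ℓ (for some ℓ ≥ 0) if and only if A ≅ C₄ × C₂^ℓ and y is the unique non-identity square in A. -/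
/-!
In `Q₈ × C₂^ℓ` every square is `1` or the central involution, so the same holds in `R`, with
`y = x²` as the involution. Thus `A` is an abelian group of order `2^(ℓ+2)` whose squares are
`1` and `y`. Its `2`-torsion is an `𝔽₂`-vector space containing `y`; a complement of `⟨y⟩` there,
together with any `a₀` with `a₀² = y`, splits `A` as `C₄ × C₂^ℓ`.

Conversely, given `A ≅ C₄ × C₂^ℓ`, the element `(2, 0)` is a non-trivial square, hence equals `y`.
Then `(a i, v) ↦ (i, v)` and `(xa i, v) ↦ x (i, v)` is an isomorphism `Q₈ × C₂^ℓ ≅ R`: it is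
multiplicative because `x` inverts `A` and squares to `(2, 0)`, and `C₂^ℓ` has exponent `2`.
-/

theorem exists_linearEquiv_prod_fin_apply_one_zero {F V : Type*} [Field F] [AddCommGroup V]
    [Module F V] [FiniteDimensional F V] {z : V} (hz : z ≠ 0) :
    ∃ (m : ℕ) (e : (F × (Fin m → F)) ≃ₗ[F] V), e (1, 0) = z := by
  obtain ⟨W, hW⟩ := Submodule.exists_isCompl (F ∙ z)
  refine ⟨Module.finrank F W, (LinearEquiv.toSpanNonzeroSingleton F V z hz).prodCongr
    (Module.finBasis F W).equivFun.symm ≪≫ₗ Submodule.prodEquivOfIsCompl _ _ hW, ?_⟩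
  simp

section TwoTorsion

open AddSubgroup

variable {B : Type*} [AddCommGroup B] {g : B} {m : ℕ}
  (e : (ZMod 2 × (Fin m → ZMod 2)) ≃+ torsionBy B 2)

theorem eq_zero_of_val_nsmul_add_eq_zero (he : (e (1, 0) : B) = 2 • g) (hg : 2 • g ≠ 0)
    (h4 : 4 • g = 0) {i : ZMod 4} {v : Fin m → ZMod 2} (h : i.val • g + e (0, v) = 0) :
    i = 0 ∧ v = 0 := by
  have h2 : 2 • i.val • g = 0 := by
    rw [eq_neg_of_add_eq_zero_left h, smul_neg, torsionBy.nsmul_iff.mp (e (0, v)).2, neg_zero]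
  obtain hi | hi | hi | hi : i.val = 0 ∨ i.val = 1 ∨ i.val = 2 ∨ i.val = 3 := by
    have := ZMod.val_lt i; omega
  · rw [hi, zero_smul, zero_add, ZeroMemClass.coe_eq_zero, e.map_eq_zero_iff] at h
    exact ⟨ZMod.val_eq_zero i |>.mp hi, congrArg Prod.snd h⟩
  · rw [hi, one_smul] at h2
    exact absurd h2 hg
  · have : e (1, v) = 0 := Subtype.ext <| by
      rw [show ((1 : ZMod 2), v) = (1, 0) + (0, v) by simp, map_add, AddSubgroup.coe_add, he]
      rwa [hi] at h
    exact absurd (congrArg Prod.fst (e.map_eq_zero_iff.mp this)) one_ne_zero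
  · rw [hi, smul_smul, show 2 * 3 = 4 + 2 from rfl, add_nsmul, h4, zero_add] at h2
    exact absurd h2 hg

theorem exists_val_nsmul_add_eq (he : (e (1, 0) : B) = 2 • g)
    (hsq : ∀ b : B, 2 • b = 0 ∨ 2 • b = 2 • g) (b : B) :
    ∃ (i : ZMod 4) (v : Fin m → ZMod 2), i.val • g + e (0, v) = b := by
  obtain ⟨c, hc2, hc⟩ : ∃ c < 2, b - c • g ∈ torsionBy B 2 := by
    rcases hsq b with h | h
    · exact ⟨0, two_pos, torsionBy.nsmul_iff.mpr (by simpa using h)⟩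
    · exact ⟨1, one_lt_two, torsionBy.nsmul_iff.mpr (by rw [one_smul, nsmul_sub, h, sub_self])⟩
  obtain ⟨⟨j, v⟩, hjv⟩ := e.surjective ⟨_, hc⟩
  have hj : (e (j, v) : B) = (2 * j.val) • g + e (0, v) := by
    rw [show (j, v) = j.val • ((1 : ZMod 2), (0 : Fin m → ZMod 2)) + (0, v) by simp, map_add,
      map_nsmul, AddSubgroup.coe_add, AddSubgroup.coe_nsmul, he, smul_smul, mul_comm]
  refine ⟨(c + 2 * j.val : ℕ), v, ?_⟩
  rw [ZMod.val_cast_of_lt (by have := ZMod.val_lt j; omega), add_nsmul, add_assoc, ← hj, hjv]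
  exact add_sub_cancel _ _

end TwoTorsion

open AddSubgroup in
theorem exists_addEquiv_zmod_four_prod {B : Type*} [AddCommGroup B] [Finite B] {g : B}
    (hg : 2 • g ≠ 0) (hsq : ∀ b : B, 2 • b = 0 ∨ 2 • b = 2 • g) :
    ∃ m : ℕ, Nonempty ((ZMod 4 × (Fin m → ZMod 2)) ≃+ B) := by
  have h4 : 4 • g = 0 := by
    have h22 : 2 • 2 • g = 4 • g := by rw [smul_smul]; rfl
    rcases hsq (2 • g) with h | h
    · rwa [h22] at h
    · rw [h22, show 4 • g = 2 • g + 2 • g by rw [← add_nsmul], add_eq_right] at h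
      exact absurd h hg
  let _ : Module (ZMod 2) (torsionBy B 2) := torsionBy.zmodModule
  have hg2 : 2 • g ∈ torsionBy B 2 := torsionBy.nsmul_iff.mpr (by rw [smul_smul]; exact h4)
  obtain ⟨m, e, he⟩ := exists_linearEquiv_prod_fin_apply_one_zero (F := ZMod 2) (z := ⟨_, hg2⟩)
    (fun h => hg (congrArg Subtype.val h))
  have he' : (e.toAddEquiv (1, 0) : B) = 2 • g := congrArg Subtype.val he
  let Θ : (ZMod 4 × (Fin m → ZMod 2)) →+ B :=
    { toFun p := p.1.val • g + e (0, p.2)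
      map_zero' := by simp
      map_add' p q := by
        simp only [Prod.fst_add, Prod.snd_add, ZMod.val_add, ← nsmul_eq_mod_nsmul _ h4, add_nsmul]
        rw [show ((0 : ZMod 2), p.2 + q.2) = (0, p.2) + (0, q.2) by simp, map_add, coe_add]
        abel }
  refine ⟨m, ⟨AddEquiv.ofBijective Θ ⟨(injective_iff_map_eq_zero Θ).mpr ?_, fun b => ?_⟩⟩⟩
  · rintro ⟨i, v⟩ h
    obtain ⟨rfl, rfl⟩ := eq_zero_of_val_nsmul_add_eq_zero e.toAddEquiv he' hg h4 h
    rfl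
  · obtain ⟨i, v, h⟩ := exists_val_nsmul_add_eq e.toAddEquiv he' hsq b
    exact ⟨(i, v), h⟩

theorem nonempty_mulEquiv_zmod_four_prod {A : Type*} [CommGroup A] {ℓ : ℕ}
    (hcard : Nat.card A = 2 ^ (ℓ + 2)) {g : A} (hg : g ^ 2 ≠ 1)
    (hsq : ∀ a : A, a ^ 2 = 1 ∨ a ^ 2 = g ^ 2) :
    Nonempty (A ≃* Multiplicative (ZMod 4 × (Fin ℓ → ZMod 2))) := by
  have : Finite A := Nat.finite_of_card_ne_zero (by rw [hcard]; positivity)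
  obtain ⟨m, ⟨e⟩⟩ := exists_addEquiv_zmod_four_prod (B := Additive A) (g := .ofMul g) hg hsq
  obtain rfl : m = ℓ := by
    have hm := Nat.card_congr e.toEquiv
    simp only [Nat.card_prod, Nat.card_pi, Nat.card_zmod, Finset.prod_const, Finset.card_univ,
      Fintype.card_fin, Nat.card_congr Additive.toMul, hcard] at hm
    have : 2 ^ (m + 2) = 2 ^ (ℓ + 2) := by rw [← hm]; ring
    have := Nat.pow_right_injective le_rfl this
    omega
  exact ⟨(AddEquiv.toMultiplicativeLeft e).symm⟩

namespace QuaternionGroup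

open Multiplicative

variable {n : ℕ} {V G : Type*} [AddCommGroup V] [Group G]

def prodLift (hV : ∀ v : V, v + v = 0) (ψ : Multiplicative (ZMod (2 * n) × V) →* G) (x : G)
    (hx2 : x ^ 2 = ψ (ofAdd (n, 0))) (hconj : ∀ p, x⁻¹ * ψ p * x = (ψ p)⁻¹) :
    QuaternionGroup n × Multiplicative V →* G where
  toFun
    | (a i, v) => ψ (ofAdd (i, v.toAdd))
    | (xa i, v) => x * ψ (ofAdd (i, v.toAdd))
  map_one' := by
    change ψ (ofAdd (0, 0)) = 1
    exact ψ.map_one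
  map_mul' := by
    have hψx : ∀ p, ψ p * x = x * (ψ p)⁻¹ := fun p => by
      rw [← hconj, mul_assoc, mul_inv_cancel_left]
    have hψ : ∀ (i j : ZMod (2 * n)) (v w : V),
        (ψ (ofAdd (i, v)))⁻¹ * ψ (ofAdd (j, w)) = ψ (ofAdd (j - i, v + w)) := fun i j v w => by
      rw [← map_inv, ← map_mul, ← ofAdd_neg, ← ofAdd_add, Prod.neg_mk,
        neg_eq_of_add_eq_zero_left (hV v), Prod.mk_add_mk, neg_add_eq_sub]
    rintro ⟨i | i, v⟩ ⟨j | j, w⟩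
    · simp only [Prod.mk_mul_mk, a_mul_a, toAdd_mul, ← map_mul, ← ofAdd_add, Prod.mk_add_mk]
    · simp only [Prod.mk_mul_mk, a_mul_xa, toAdd_mul]
      rw [← mul_assoc, hψx, mul_assoc, hψ]
    · simp only [Prod.mk_mul_mk, xa_mul_a, toAdd_mul, mul_assoc, ← map_mul, ← ofAdd_add,
        Prod.mk_add_mk]
    · simp only [Prod.mk_mul_mk, xa_mul_xa, toAdd_mul]
      rw [show x * ψ (ofAdd (i, v.toAdd)) * (x * ψ (ofAdd (j, w.toAdd)))
          = x * (ψ (ofAdd (i, v.toAdd)) * x) * ψ (ofAdd (j, w.toAdd)) by group, hψx,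
        ← mul_assoc, ← sq, hx2, mul_assoc, hψ, ← map_mul, ← ofAdd_add, Prod.mk_add_mk,
        zero_add, add_sub_assoc]

theorem nonempty_mulEquiv_prod_of_index_eq_two {R : Type*} [Group R] {A : Subgroup R}
    (hA : A.index = 2) {x : R} (hx : x ∉ A) (hconj : ∀ a ∈ A, x⁻¹ * a * x = a⁻¹)
    (hV : ∀ v : V, v + v = 0) (φ : Multiplicative (ZMod (2 * n) × V) ≃* A)
    (hx2 : x ^ 2 = φ (ofAdd (n, 0))) :
    Nonempty (R ≃* QuaternionGroup n × Multiplicative V) := by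
  let f := prodLift hV (A.subtype.comp φ.toMonoidHom) x hx2 (fun p => hconj _ (φ p).2)
  refine ⟨(MulEquiv.ofBijective f ⟨?_, fun r => ?_⟩).symm⟩
  · rw [injective_iff_map_eq_one]
    rintro ⟨i | i, v⟩ h
    · have h' : φ (ofAdd (i, v.toAdd)) = 1 := Subtype.ext h
      rw [φ.map_eq_one_iff, ofAdd_eq_one, Prod.mk_eq_zero, toAdd_eq_zero] at h'
      rw [h'.1, h'.2]
      rfl
    · have h' : x * φ (ofAdd (i, v.toAdd)) = 1 := h
      exact absurd (eq_inv_of_mul_eq_one_left h' ▸ inv_mem (φ _).2) hx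
  · by_cases hr : r ∈ A
    · refine ⟨(a (φ.symm ⟨r, hr⟩).toAdd.1, ofAdd (φ.symm ⟨r, hr⟩).toAdd.2), ?_⟩
      change (φ (ofAdd ((φ.symm ⟨r, hr⟩).toAdd.1, (φ.symm ⟨r, hr⟩).toAdd.2)) : R) = r
      simp
    · have hxr : x⁻¹ * r ∈ A := (Subgroup.mul_mem_iff_of_index_two hA).mpr
        (iff_of_false (inv_mem_iff.not.mpr hx) hr)
      refine ⟨(xa (φ.symm ⟨_, hxr⟩).toAdd.1, ofAdd (φ.symm ⟨_, hxr⟩).toAdd.2), ?_⟩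
      change x * (φ (ofAdd ((φ.symm ⟨_, hxr⟩).toAdd.1, (φ.symm ⟨_, hxr⟩).toAdd.2)) : R) = r
      simp

theorem sq_eq_one_or_eq_a_two (q : QuaternionGroup 2) : q ^ 2 = 1 ∨ q ^ 2 = a 2 := by
  revert q
  decide

theorem sq_eq_one_or_eq_sq_of_mulEquiv_prod (hV : ∀ v : V, v + v = 0)
    (e : G ≃* QuaternionGroup 2 × Multiplicative V) {x : G} (hx : x ^ 2 ≠ 1) (g : G) :
    g ^ 2 = 1 ∨ g ^ 2 = x ^ 2 := by
  have key : ∀ r : G, r ^ 2 = 1 ∨ r ^ 2 = e.symm (a 2, 1) := fun r => by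
    have hv : (e r).2 ^ 2 = 1 := by rw [sq]; exact hV (toAdd (e r).2)
    rw [← e.symm_apply_apply r, ← map_pow, ← map_one e.symm, e.symm.injective.eq_iff,
      e.symm.injective.eq_iff, Prod.pow_mk, hv, ← Prod.mk_one_one, Prod.mk.injEq, Prod.mk.injEq]
    simpa using (e r).1.sq_eq_one_or_eq_a_two
  rw [(key x).resolve_left hx]
  exact key g

theorem card_prod_multiplicative_fin_zmod_two (ℓ : ℕ) :
    Nat.card (QuaternionGroup 2 × Multiplicative (Fin ℓ → ZMod 2)) = 2 ^ (ℓ + 3) := by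
  simp [Nat.card_eq_fintype_card, QuaternionGroup.card, pow_succ]
  ring

end QuaternionGroup

theorem stmt5_general {R : Type*} [Group R] (A : Subgroup R) (y x : R)
    (hAcomm : ∀ a ∈ A, ∀ b ∈ A, a * b = b * a)
    (hexp : ∃ a ∈ A, a ^ 2 ≠ 1)
    (hy1 : y ≠ 1)
    (hx : x ∉ A) (hx2 : x ^ 2 = y)
    (hconj : ∀ a ∈ A, x⁻¹ * a * x = a⁻¹)
    (hAind : A.index = 2) (ℓ : ℕ) :
    Nonempty (R ≃* QuaternionGroup 2 × Multiplicative (Fin ℓ → ZMod 2)) ↔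
      (Nonempty (A ≃* Multiplicative (ZMod 4 × (Fin ℓ → ZMod 2))) ∧
        (∃ a ∈ A, a ^ 2 = y) ∧
        (∀ b ∈ A, b ≠ 1 → (∃ a ∈ A, a ^ 2 = b) → b = y)) := by
  have hV (v : Fin ℓ → ZMod 2) : v + v = 0 := funext fun i => CharTwo.add_self_eq_zero (v i)
  constructor
  · rintro ⟨e⟩
    have hsq : ∀ r : R, r ^ 2 = 1 ∨ r ^ 2 = y :=
      hx2 ▸ QuaternionGroup.sq_eq_one_or_eq_sq_of_mulEquiv_prod hV e (hx2 ▸ hy1)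
    obtain ⟨a₀, ha₀A, ha₀⟩ := hexp
    have ha₀y : a₀ ^ 2 = y := (hsq a₀).resolve_left ha₀
    have hcard : Nat.card A = 2 ^ (ℓ + 2) := by
      have h := A.card_mul_index.trans (Nat.card_congr e.toEquiv)
      rw [hAind, QuaternionGroup.card_prod_multiplicative_fin_zmod_two] at h
      exact Nat.eq_of_mul_eq_mul_right two_pos (h.trans (pow_succ 2 (ℓ + 2)))
    let _ : CommGroup A := { mul_comm a b := Subtype.ext (hAcomm _ a.2 _ b.2) }
    refine ⟨nonempty_mulEquiv_zmod_four_prod hcard (g := ⟨a₀, ha₀A⟩)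
      (fun h => ha₀ (congrArg Subtype.val h)) (fun a => ?_), ⟨a₀, ha₀A, ha₀y⟩,
      fun b _ hb ⟨a, _, hab⟩ => hab ▸ (hsq a).resolve_left (hab ▸ hb)⟩
    simpa only [← Subtype.val_inj, Subgroup.coe_pow, OneMemClass.coe_one, ha₀y] using hsq a
  · rintro ⟨⟨eA⟩, -, huniq⟩
    have hc : (eA.symm (.ofAdd (1, 0)) : R) ^ 2 = eA.symm (.ofAdd (2, 0)) := by
      rw [← Subgroup.coe_pow, ← map_pow, ← ofAdd_nsmul]
      simp
    have hy : y = eA.symm (.ofAdd (2, 0)) := by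
      rw [← hc]
      refine (huniq _ (pow_mem (eA.symm _).2 2) ?_ ⟨_, (eA.symm _).2, rfl⟩).symm
      simpa [hc] using (by decide : (2 : ZMod 4) ≠ 0)
    exact QuaternionGroup.nonempty_mulEquiv_prod_of_index_eq_two (n := 2) hAind hx hconj hV
      eA.symm (by rw [hx2, hy]; simp)

/-- The generalised dicyclic group `R = Dic(A,y,x)` is isomorphic to
`Q₈ × C₂^ℓ` if and only if `A ≅ C₄ × C₂^ℓ` and `y` is the unique
non-identity square in `A`.  Here `Q₈` is `QuaternionGroup 2` and `C₂^ℓ` is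
modelled as `Multiplicative (Fin ℓ → ZMod 2)`. -/
theorem stmt5 {R : Type*} [Group R] [Fintype R] (A : Subgroup R) (y x : R)
    (hAcomm : ∀ a ∈ A, ∀ b ∈ A, a * b = b * a)
    (hexp : ∃ a ∈ A, a ^ 2 ≠ 1)
    (hy : y ∈ A) (hy2 : y ^ 2 = 1) (hy1 : y ≠ 1)
    (hx : x ∉ A) (hx2 : x ^ 2 = y)
    (hconj : ∀ a ∈ A, x⁻¹ * a * x = a⁻¹)
    (hAind : A.index = 2) (ℓ : ℕ) :
    Nonempty (R ≃* QuaternionGroup 2 × Multiplicative (Fin ℓ → ZMod 2)) ↔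
      (Nonempty (A ≃* Multiplicative (ZMod 4 × (Fin ℓ → ZMod 2))) ∧
        (∃ a ∈ A, a ^ 2 = y) ∧
        (∀ b ∈ A, b ≠ 1 → (∃ a ∈ A, a ^ 2 = b) → b = y)) :=
  stmt5_general A y x hAcomm hexp hy1 hx hx2 hconj hAind ℓ
end

section
/- Suppose R = Dic(A,y,x) is not isomorphic to Q₈ × C₂^ℓ for any ℓ. For any b ∈ A, the set X = {a ∈ A : a² ∈ {b, by}} has cardinality at most 2|A|/3. -/
/-!
Squaring is an endomorphism `q` of the abelian group `A`, and `X` is the preimage of `{b, b y}`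
under `q`, so `|X| ≤ 2 |ker q| = 2 |A| / |im q|`. This suffices when `|im q| ≥ 3`, and also when
`|im q| = 2` but `y ∉ im q`: then `b` and `b y` are not both squares, so `|X| ≤ |A| / 2`.

In the remaining case `im q = {1, y}`, say `y = c²`. The kernel `K` of `q` is an `𝔽₂`-space
containing `y`; for a complement `W ≅ C₂^ℓ` of `⟨y⟩` in `K`, the map `Q₈ × W → R` sending the
generators of `Q₈` to `c` and `x` and `W` identically is an injective homomorphism, and
`|R| = 2 |A| = 4 |K| = 8 |W|` makes it an isomorphism, which is excluded.
-/

section ZModPow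

variable {G : Type*} [Group G] {m : ℕ} {c : G}

lemma pow_zmod_val_add [NeZero m] (hc : c ^ m = 1) (i j : ZMod m) :
    c ^ (i + j).val = c ^ i.val * c ^ j.val := by
  rw [ZMod.val_add, ← pow_add, ← pow_eq_pow_mod _ hc]

lemma pow_zmod_val_neg [NeZero m] (hc : c ^ m = 1) (i : ZMod m) :
    c ^ (-i).val = (c ^ i.val)⁻¹ :=
  eq_inv_of_mul_eq_one_left <| by
    rw [← pow_zmod_val_add hc, neg_add_cancel, ZMod.val_zero, pow_zero]

lemma pow_zmod_val_natCast (hc : c ^ m = 1) (k : ℕ) : c ^ (k : ZMod m).val = c ^ k := by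
  rw [ZMod.val_natCast, ← pow_eq_pow_mod _ hc]

end ZModPow

namespace QuaternionGroup

variable {G : Type*} [Group G] {n : ℕ} [NeZero n] {c x : G}

def lift (hc : c ^ (2 * n) = 1) (hx : x ^ 2 = c ^ n) (hxc : x⁻¹ * c * x = c⁻¹) :
    QuaternionGroup n →* G where
  toFun
    | a i => c ^ i.val
    | xa i => x * c ^ i.val
  map_one' := show c ^ (0 : ZMod (2 * n)).val = 1 by rw [ZMod.val_zero, pow_zero]
  map_mul' := by
    have hswap : ∀ i : ZMod (2 * n), c ^ i.val * x = x * c ^ (-i).val := by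
      intro i
      rw [pow_zmod_val_neg hc, ← inv_pow]
      refine (SemiconjBy.pow_right ?_ i.val).eq.symm
      rw [SemiconjBy, ← hxc]
      group
    rintro (i | i) (j | j)
    · exact pow_zmod_val_add hc i j
    · show x * c ^ (j - i).val = c ^ i.val * (x * c ^ j.val)
      rw [← mul_assoc, hswap, mul_assoc, ← pow_zmod_val_add hc, neg_add_eq_sub]
    · show x * c ^ (i + j).val = x * c ^ i.val * c ^ j.val
      rw [mul_assoc, pow_zmod_val_add hc]
    · show c ^ ((n : ZMod (2 * n)) + j - i).val = x * c ^ i.val * (x * c ^ j.val)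
      rw [mul_assoc, ← mul_assoc (c ^ i.val), hswap, ← mul_assoc, ← mul_assoc, ← sq, hx,
        mul_assoc, ← pow_zmod_val_add hc, add_sub_assoc, pow_zmod_val_add hc,
        pow_zmod_val_natCast hc, sub_eq_neg_add]

variable (hc : c ^ (2 * n) = 1) (hx : x ^ 2 = c ^ n) (hxc : x⁻¹ * c * x = c⁻¹)

@[simp]
lemma lift_a (i : ZMod (2 * n)) : lift hc hx hxc (a i) = c ^ i.val := rfl

@[simp]
lemma lift_xa (i : ZMod (2 * n)) : lift hc hx hxc (xa i) = x * c ^ i.val := rfl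

lemma commute_lift {z : G} (hcz : Commute c z) (hxz : Commute x z) (q : QuaternionGroup n) :
    Commute (lift hc hx hxc q) z := by
  cases q with
  | a i => exact hcz.pow_left _
  | xa i => exact hxz.mul_left (hcz.pow_left _)

end QuaternionGroup

lemma exists_injective_pi_zmod_two_of_sq_eq_one {G : Type*} [CommGroup G] [Finite G]
    (hG : ∀ g : G, g ^ 2 = 1) {y : G} (hy : y ≠ 1) :
    ∃ (ℓ : ℕ) (ψ : Multiplicative (Fin ℓ → ZMod 2) →* G),
      Function.Injective ψ ∧ y ∉ ψ.range ∧ Nat.card G = 2 ^ (ℓ + 1) := by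
  let _ : Module (ZMod 2) (Additive G) :=
    AddCommGroup.zmodModule fun g => congrArg Additive.ofMul (hG g.toMul)
  obtain ⟨W, hW⟩ := (Submodule.span (ZMod 2) {Additive.ofMul y}).exists_isCompl
  let e := (Module.finBasis (ZMod 2) W).equivFun.symm
  refine ⟨Module.finrank (ZMod 2) W,
    AddMonoidHom.toMultiplicativeLeft (W.subtype.comp e.toLinearMap).toAddMonoidHom, ?_, ?_, ?_⟩
  · exact Multiplicative.toAdd.injective.comp (Subtype.val_injective.comp e.injective) |>.comp
      Multiplicative.toAdd.injective
  · rintro ⟨v, hv⟩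
    have hyW : Additive.ofMul y ∈ W := hv ▸ (e v.toAdd).2
    exact hy <| Additive.ofMul.injective <| (Submodule.mem_bot _).mp <|
      hW.disjoint.le_bot ⟨Submodule.mem_span_singleton_self _, hyW⟩
  · have hy0 : Additive.ofMul y ≠ 0 := fun h => hy (Additive.ofMul.injective h)
    rw [Nat.card_congr Additive.ofMul, Module.natCard_eq_pow_finrank (K := ZMod 2), Nat.card_zmod,
      ← Submodule.finrank_add_eq_of_isCompl hW, finrank_span_singleton hy0, add_comm]

namespace MonoidHom

variable {G H : Type*} [Group G] [Group H] (f : G →* H)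

lemma ncard_preimage_singleton_le (t : H) : (f ⁻¹' {t}).ncard ≤ Nat.card f.ker := by
  by_cases ht : t ∈ f.range
  · obtain ⟨g, rfl⟩ := ht
    rw [← Nat.card_coe_set_eq, Nat.card_congr (f.fiberEquivKer g)]
  · rw [Set.preimage_singleton_eq_empty.mpr ht, Set.ncard_empty]
    exact Nat.zero_le _

lemma ncard_preimage_pair_le (b y : H) :
    (f ⁻¹' {b, b * y}).ncard ≤ 2 * Nat.card f.ker := by
  rw [Set.insert_eq, Set.preimage_union, two_mul]
  exact (Set.ncard_union_le _ _).trans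
    (add_le_add (f.ncard_preimage_singleton_le b) (f.ncard_preimage_singleton_le _))

lemma ncard_preimage_pair_le_of_notMem_range {y : H} (hy : y ∉ f.range) (b : H) :
    (f ⁻¹' {b, b * y}).ncard ≤ Nat.card f.ker := by
  by_cases hb : b ∈ f.range
  · have hby : f ⁻¹' {b * y} = ∅ := Set.preimage_singleton_eq_empty.mpr fun hby =>
      hy (by simpa using f.range.mul_mem (f.range.inv_mem hb) hby)
    rw [Set.insert_eq, Set.preimage_union, hby, Set.union_empty]
    exact f.ncard_preimage_singleton_le b
  · rw [Set.insert_eq, Set.preimage_union, Set.preimage_singleton_eq_empty.mpr hb,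
      Set.empty_union]
    exact f.ncard_preimage_singleton_le _

lemma three_mul_ncard_preimage_pair_le [Finite G] (hf : f.range ≠ ⊥) {y : H}
    (hy : ¬(y ∈ f.range ∧ Nat.card f.range = 2)) (b : H) :
    3 * (f ⁻¹' {b, b * y}).ncard ≤ 2 * Nat.card G := by
  have hG : Nat.card G = Nat.card f.ker * Nat.card f.range := by
    rw [← f.ker.card_mul_index, Subgroup.index_ker]
  have : Finite f.range := .of_surjective _ f.rangeRestrict_surjective
  have hm : 1 < Nat.card f.range := (Subgroup.one_lt_card_iff_ne_bot _).mpr hf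
  by_cases hyr : y ∈ f.range
  · have h3 : 3 ≤ Nat.card f.range := by
      have h2 : Nat.card f.range ≠ 2 := fun h => hy ⟨hyr, h⟩
      omega
    have hX := f.ncard_preimage_pair_le b y
    rw [hG]
    nlinarith
  · have hX := f.ncard_preimage_pair_le_of_notMem_range hyr b
    rw [hG]
    nlinarith

end MonoidHom

section Involution

variable {G : Type*} [Group G] {k : G}

lemma inv_eq_self_of_sq_eq_one (hk : k ^ 2 = 1) : k⁻¹ = k :=
  inv_eq_of_mul_eq_one_right (by rw [← sq, hk])

lemma commute_of_inv_mul_mul_eq_inv {x : G} (hk : k ^ 2 = 1) (h : x⁻¹ * k * x = k⁻¹) :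
    Commute x k := by
  rw [inv_eq_self_of_sq_eq_one hk] at h
  calc x * k = x * (x⁻¹ * k * x) := by rw [h]
    _ = k * x := by group

lemma eq_zero_and_eq_one_of_pow_val_mul_eq_one {c : G} (hc2 : c ^ 2 ≠ 1)
    (hc4 : (c ^ 2) ^ 2 = 1) (hk : k ^ 2 = 1) (hkc : k ≠ c ^ 2) {i : ZMod 4}
    (h : c ^ i.val * k = 1) : i = 0 ∧ k = 1 := by
  have hci : c ^ i.val = k := by
    rw [eq_inv_of_mul_eq_one_left h, inv_eq_self_of_sq_eq_one hk]
  have hdvd : orderOf (c ^ 2) ∣ i.val := orderOf_dvd_of_pow_eq_one <| by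
    rw [← pow_mul, mul_comm, pow_mul, hci, hk]
  rw [orderOf_eq_prime hc4 hc2] at hdvd
  have hi4 : i.val < 4 := ZMod.val_lt i
  obtain hi0 | hi2 : i.val = 0 ∨ i.val = 2 := by omega
  · rw [hi0, pow_zero] at hci
    exact ⟨(ZMod.val_eq_zero i).mp hi0, hci.symm⟩
  · exact absurd (hi2 ▸ hci).symm hkc

end Involution

open scoped IsMulCommutative

section Dicyclic

variable {R : Type*} [Group R] (A : Subgroup R) [IsMulCommutative A] {x : R}

lemma exists_injective_quaternionGroup_two_prod [Finite A] (hx : x ∉ A)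
    (hconj : ∀ a ∈ A, x⁻¹ * a * x = a⁻¹) {y : A} (hy1 : y ≠ 1) (hy2 : y ^ 2 = 1)
    (hyr : y ∈ (powMonoidHom 2 : A →* A).range) (hx2 : x ^ 2 = y) :
    ∃ (ℓ : ℕ) (F : QuaternionGroup 2 × Multiplicative (Fin ℓ → ZMod 2) →* R),
      Function.Injective F ∧ Nat.card (powMonoidHom 2 : A →* A).ker = 2 ^ (ℓ + 1) := by
  obtain ⟨c, hc⟩ := hyr
  rw [powMonoidHom_apply] at hc
  subst hc
  set K := (powMonoidHom 2 : A →* A).ker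
  have hK : ∀ k : K, k ^ 2 = 1 := fun k => Subtype.ext k.2
  obtain ⟨ℓ, ψ, hψ, hyψ, hcard⟩ :=
    exists_injective_pi_zmod_two_of_sq_eq_one hK (y := ⟨c ^ 2, hy2⟩)
      fun h => hy1 (congrArg Subtype.val h)
  have hc4 : (c : R) ^ (2 * 2) = 1 := by rw [pow_mul]; exact_mod_cast hy2
  replace hx2 : x ^ 2 = (c : R) ^ 2 := hx2
  let φ := QuaternionGroup.lift hc4 hx2 (hconj c c.2)
  let ψR := A.subtype.comp (K.subtype.comp ψ)
  have hcomm : ∀ q v, Commute (φ q) (ψR v) := fun q v =>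
    QuaternionGroup.commute_lift _ _ _ ((Commute.all _ _).map A.subtype)
      (commute_of_inv_mul_mul_eq_inv (congrArg Subtype.val (ψ v).2) (hconj _ (ψ v : A).2)) q
  refine ⟨ℓ, φ.noncommCoprod ψR hcomm, (injective_iff_map_eq_one _).mpr ?_, hcard⟩
  rintro ⟨i | i, v⟩ h <;>
    simp only [MonoidHom.noncommCoprod_apply, φ, QuaternionGroup.lift_a,
      QuaternionGroup.lift_xa] at h
  · have hA : c ^ i.val * (ψ v : A) = 1 := Subtype.ext (by simpa [ψR] using h)
    have hψc : (ψ v : A) ≠ c ^ 2 := fun hv => hyψ ⟨v, Subtype.ext hv⟩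
    obtain ⟨rfl, hv⟩ := eq_zero_and_eq_one_of_pow_val_mul_eq_one hy1 hy2 (ψ v).2 hψc hA
    rw [hψ (show ψ v = ψ 1 by rw [map_one]; exact Subtype.ext hv), QuaternionGroup.a_zero]
    rfl
  · refine absurd ?_ hx
    rw [mul_assoc] at h
    rw [eq_inv_of_mul_eq_one_left h]
    exact A.inv_mem (A.mul_mem (A.pow_mem c.2 _) (ψ v : A).2)

theorem exists_mulEquiv_quaternionGroup_two_prod [Finite R] (hA : A.index = 2) (hx : x ∉ A)
    (hconj : ∀ a ∈ A, x⁻¹ * a * x = a⁻¹) {y : A} (hy1 : y ≠ 1) (hy2 : y ^ 2 = 1)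
    (hyr : y ∈ (powMonoidHom 2 : A →* A).range) (hx2 : x ^ 2 = y)
    (hrange : Nat.card (powMonoidHom 2 : A →* A).range = 2) :
    ∃ ℓ : ℕ, Nonempty (R ≃* QuaternionGroup 2 × Multiplicative (Fin ℓ → ZMod 2)) := by
  obtain ⟨ℓ, F, hF, hker⟩ := exists_injective_quaternionGroup_two_prod A hx hconj hy1 hy2 hyr hx2
  have hcard : Nat.card R = Nat.card (QuaternionGroup 2 × Multiplicative (Fin ℓ → ZMod 2)) := by
    rw [← A.card_mul_index, hA, ← (powMonoidHom 2 : A →* A).ker.card_mul_index,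
      Subgroup.index_ker, hrange, hker, Nat.card_prod, Nat.card_eq_fintype_card,
      QuaternionGroup.card]
    simp only [Nat.card_eq_fintype_card, Fintype.card_multiplicative, Fintype.card_pi, ZMod.card,
      Finset.prod_const, Finset.card_univ, Fintype.card_fin]
    ring
  exact ⟨ℓ, ⟨(MulEquiv.ofBijective F (hF.bijective_of_nat_card_le hcard.le)).symm⟩⟩

end Dicyclic

/-- If `R = Dic(A,y,x)` is not isomorphic to `Q₈ × C₂^ℓ` for any `ℓ`, then for
any `b ∈ A` the set `X = {a ∈ A : a² ∈ {b, by}}` has cardinality at most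
`2|A|/3`. -/
theorem stmt6 {R : Type*} [Group R] [Fintype R] (A : Subgroup R) (y x : R)
    (hAcomm : ∀ a ∈ A, ∀ b ∈ A, a * b = b * a)
    (hexp : ∃ a ∈ A, a ^ 2 ≠ 1)
    (hy : y ∈ A) (hy2 : y ^ 2 = 1) (hy1 : y ≠ 1)
    (hx : x ∉ A) (hx2 : x ^ 2 = y)
    (hconj : ∀ a ∈ A, x⁻¹ * a * x = a⁻¹)
    (hAind : A.index = 2)
    (hnotQ : ¬ ∃ ℓ : ℕ,
      Nonempty (R ≃* QuaternionGroup 2 × Multiplicative (Fin ℓ → ZMod 2)))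
    (b : R) (hb : b ∈ A) :
    3 * Set.ncard {a : R | a ∈ A ∧ (a ^ 2 = b ∨ a ^ 2 = b * y)} ≤
      2 * Nat.card A := by
  have : IsMulCommutative A := ⟨⟨fun a b => Subtype.ext (hAcomm _ a.2 _ b.2)⟩⟩
  let sq : A →* A := powMonoidHom 2
  have hX : {a : R | a ∈ A ∧ (a ^ 2 = b ∨ a ^ 2 = b * y)} =
      Subtype.val '' (sq ⁻¹' {⟨b, hb⟩, ⟨b, hb⟩ * ⟨y, hy⟩}) := by
    ext a
    simp only [Set.mem_ofPred_eq, MulMemClass.mk_mul_mk, Set.mem_image, Set.mem_preimage,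
      powMonoidHom_apply, Set.mem_insert_iff, Subtype.ext_iff, SubmonoidClass.coe_pow,
      Set.mem_singleton_iff, Subtype.exists, exists_and_left, exists_prop, exists_eq_right_right,
      sq]
    exact and_comm
  have hsq : sq.range ≠ ⊥ := by
    obtain ⟨a, ha, ha2⟩ := hexp
    intro h
    have := DFunLike.congr_fun (MonoidHom.range_eq_bot_iff.mp h) ⟨a, ha⟩
    exact ha2 (by simpa [sq] using congrArg Subtype.val this)
  rw [hX, Set.ncard_image_of_injective _ Subtype.val_injective]
  refine sq.three_mul_ncard_preimage_pair_le hsq (fun ⟨hyr, hrange⟩ => hnotQ ?_) _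
  exact exists_mulEquiv_quaternionGroup_two_prod A hAind hx hconj (y := ⟨y, hy⟩)
    (fun h => hy1 (congrArg Subtype.val h)) (Subtype.ext hy2) hyr hx2 hrange
end

section
/- A finite primitive permutation group with an abelian point-stabiliser contains a regular elementary abelian normal p-subgroup (i.e., it is of affine type). -/
/-!
Primitivity makes every stabiliser maximal. For `1 ≠ h ∈ G_β` the centraliser of `h` contains the
abelian group `G_β`, so by maximality and faithfulness it equals `G_β`. Hence if `1 ≠ h ∈ H = G_ω`
fixes `β`, then `H ≤ C(h) = G_β`, which forces `β = ω` because `H` is not normal: `H` is a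
Frobenius complement. Counting the fixed points of an element of prime order of `H` shows that
`|H|` and `|Ω|` are coprime. As `H ∩ H^g = 1` for `g ∉ H`, the transfer `G → H` is `h ↦ h ^ |Ω|`
on `H`, a bijection, so its kernel `N` is a normal complement of `H`; it is regular and `G / N`
is abelian.

For a prime `p ∣ |N|` and `P ∈ Syl_p(N)`, the Frattini argument and Schur–Zassenhaus give a
complement `L` of `N` inside `N_G(P)`. It is abelian, and an element of prime order of `L` fixes a
point `β`, so `L` is contained in, hence equal to, `G_β`. Thus `G_β` normalises `P`, the `P`-orbit
of `β` is a block, and `P = N`. The elements of order dividing `p` in the centre of the `p`-group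
`N` form the required subgroup.
-/

open MulAction

def IsPrimitiveAction (G Ω : Type*) [Group G] [MulAction G Ω] : Prop :=
  IsPretransitive G Ω ∧ ∀ B : Set Ω, IsBlock G B → IsTrivialBlock B

theorem IsPrimitiveAction.isPreprimitive {G Ω : Type*} [Group G] [MulAction G Ω]
    (h : IsPrimitiveAction G Ω) : IsPreprimitive G Ω :=
  haveI := h.1
  { isTrivialBlock_of_isBlock := fun hB => h.2 _ hB }

theorem MonoidHom.isComplement'_ker_of_bijective_domRestrict {G A : Type*} [Group G] [Group A]
    (f : G →* A) {H : Subgroup G} (hf : Function.Bijective (f.domRestrict H)) :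
    f.ker.IsComplement' H := by
  refine Subgroup.isComplement'_of_disjoint_and_mul_eq_univ ?_ ?_
  · refine Subgroup.disjoint_def.mpr fun {x} hker hx => ?_
    have : f.domRestrict H ⟨x, hx⟩ = f.domRestrict H 1 := by simpa using hker
    exact congrArg Subtype.val (hf.1 this)
  · refine Set.eq_univ_of_forall fun g => ?_
    obtain ⟨h, hh⟩ := hf.2 (f g)
    exact ⟨g * h⁻¹, by simp [← hh], h, h.2, inv_mul_cancel_right g h⟩

namespace Subgroup

variable {G : Type*} [Group G]

theorem exists_isComplement'_le_of_coprime [Finite G] {N M : Subgroup G} [N.Normal]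
    (hcop : (Nat.card N).Coprime N.index) (hMN : M ⊔ N = ⊤) : ∃ L ≤ M, N.IsComplement' L := by
  have hJidx : (N.subgroupOf M).index = N.index := by
    rw [← relIndex, ← relIndex_sup_right, hMN, relIndex_top_right]
  have hJcard : Nat.card (N.subgroupOf M) ∣ Nat.card N :=
    card_comap_dvd_of_injective N M.subtype M.subtype_injective
  obtain ⟨L, hL⟩ := exists_right_complement'_of_coprime (hJidx ▸ hcop.coprime_dvd_left hJcard)
  refine ⟨L.map M.subtype, map_subtype_le L, isComplement'_of_card_mul_and_disjoint ?_ ?_⟩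
  · rw [card_subtype, ← hL.symm.index_eq_card, hJidx, card_mul_index]
  · refine disjoint_def.mpr fun {x} hxN hxL => ?_
    obtain ⟨y, hyL, rfl⟩ := hxL
    have hy : y ∈ N.subgroupOf M := hxN
    rw [disjoint_def.mp hL.disjoint hy hyL, map_one]

theorem isMulCommutative_of_disjoint_ker {A : Type*} [CommGroup A] (f : G →* A) {L : Subgroup G}
    (hL : Disjoint f.ker L) : IsMulCommutative L := by
  refine ⟨⟨fun ⟨x, hx⟩ ⟨y, hy⟩ => Subtype.ext ?_⟩⟩
  have hker : x * y * (y * x)⁻¹ ∈ f.ker := by simp [mul_comm (f x)]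
  have hmem : x * y * (y * x)⁻¹ ∈ L := L.mul_mem (L.mul_mem hx hy) (L.inv_mem (L.mul_mem hy hx))
  exact mul_inv_eq_one.mp (disjoint_def.mp hL hker hmem)

def torsionBy (A : Subgroup G) [IsMulCommutative A] (n : ℕ) : Subgroup G where
  carrier := {x | x ∈ A ∧ x ^ n = 1}
  one_mem' := ⟨A.one_mem, one_pow n⟩
  mul_mem' {a b} ha hb := ⟨A.mul_mem ha.1 hb.1, by
    have hab : Commute a b := setLike_mul_comm (s := A) ha.1 hb.1
    rw [hab.mul_pow, ha.2, hb.2, one_mul]⟩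
  inv_mem' {a} ha := ⟨A.inv_mem ha.1, by rw [inv_pow, ha.2, inv_one]⟩

variable {A : Subgroup G} [IsMulCommutative A] {n : ℕ}

theorem torsionBy_le : A.torsionBy n ≤ A := fun _ hx => hx.1

theorem pow_eq_one_of_mem_torsionBy {x : G} (hx : x ∈ A.torsionBy n) : x ^ n = 1 := hx.2

instance torsionBy_normal [A.Normal] : (A.torsionBy n).Normal where
  conj_mem x hx g := ⟨‹A.Normal›.conj_mem x hx.1 g, by
    rw [← MulAut.conj_apply, ← map_pow, pow_eq_one_of_mem_torsionBy hx, map_one]⟩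

theorem torsionBy_ne_bot [Finite G] {p : ℕ} [Fact p.Prime] (hA : IsPGroup p A) (hne : A ≠ ⊥) :
    A.torsionBy p ≠ ⊥ := by
  have hp : p ∣ Nat.card A :=
    hA.card_eq_or_dvd.resolve_left fun h => hne (card_eq_one.mp h)
  obtain ⟨x, hx⟩ := exists_prime_orderOf_dvd_card' p hp
  rw [← orderOf_coe] at hx
  intro hbot
  have hmem : (x : G) ∈ A.torsionBy p := ⟨x.2, hx ▸ pow_orderOf_eq_one _⟩
  rw [hbot, mem_bot] at hmem
  exact (Fact.out : p.Prime).ne_one (by rw [← hx, hmem, orderOf_one])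

end Subgroup

namespace MulAction

variable {G Ω : Type*} [Group G] [MulAction G Ω]

theorem card_modEq_card_fixedBy [Finite Ω] {p : ℕ} [Fact p.Prime] {g : G} (hg : orderOf g = p) :
    Nat.card Ω ≡ Nat.card (fixedBy Ω g) [MOD p] := by
  have hP : IsPGroup p (Subgroup.zpowers g) :=
    .of_card (n := 1) (by rw [Nat.card_zpowers, hg, pow_one])
  have hfix : fixedPoints (Subgroup.zpowers g) Ω = fixedBy Ω g := by
    ext a
    refine ⟨fun ha => ha ⟨g, Subgroup.mem_zpowers g⟩, fun ha x => ?_⟩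
    obtain ⟨j, hj⟩ := Subgroup.mem_zpowers_iff.mp x.2
    rw [Subgroup.smul_def, ← hj]
    exact mem_fixedBy_zpow ha j
  simpa [hfix] using hP.card_modEq_card_fixedPoints Ω

section Pretransitive

variable [IsPretransitive G Ω]

theorem card_stabilizer_eq (a b : Ω) : Nat.card (stabilizer G a) = Nat.card (stabilizer G b) := by
  obtain ⟨g, rfl⟩ := exists_smul_eq G a b
  rw [stabilizer_smul_eq_stabilizer_map_conj,
    Subgroup.card_map_of_injective (MulAut.conj g).injective]

theorem card_eq_of_isComplement'_stabilizer {N : Subgroup G} {a : Ω}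
    (hN : N.IsComplement' (stabilizer G a)) : Nat.card N = Nat.card Ω := by
  rw [← hN.index_eq_card, index_stabilizer_of_transitive]

theorem isMulCommutative_stabilizer {a : Ω} [IsMulCommutative (stabilizer G a)] (b : Ω) :
    IsMulCommutative (stabilizer G b) := by
  obtain ⟨g, rfl⟩ := exists_smul_eq G a b
  rw [stabilizer_smul_eq_stabilizer_map_conj]
  infer_instance

theorem disjoint_stabilizer_of_normal {N : Subgroup G} [N.Normal] {a : Ω}
    (hN : Disjoint N (stabilizer G a)) (b : Ω) : Disjoint N (stabilizer G b) := by
  obtain ⟨g, rfl⟩ := exists_smul_eq G a b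
  refine Subgroup.disjoint_def.mpr fun {x} hxN hx => ?_
  rw [stabilizer_smul_eq_stabilizer_map_conj] at hx
  obtain ⟨y, hy, rfl⟩ := hx
  have hyN : y ∈ N := by simpa [mul_assoc] using ‹N.Normal›.conj_mem _ hxN g⁻¹
  simp [Subgroup.disjoint_def.mp hN hyN hy]

variable [FaithfulSMul G Ω]

theorem eq_one_of_mem_center_of_smul_eq {g : G} (hg : g ∈ Subgroup.center G) {a : Ω}
    (ha : g • a = a) : g = 1 := by
  refine eq_of_smul_eq_smul (α := Ω) fun b => ?_
  obtain ⟨x, rfl⟩ := exists_smul_eq G a b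
  rw [← mul_smul, (Subgroup.mem_center_iff.mp hg x).symm, mul_smul, ha, one_smul]

theorem eq_bot_of_normal_of_le_stabilizer {N : Subgroup G} [N.Normal] {a : Ω}
    (hN : N ≤ stabilizer G a) : N = ⊥ := by
  refine (Subgroup.eq_bot_iff_forall N).mpr fun n hn => eq_of_smul_eq_smul (α := Ω) fun b => ?_
  obtain ⟨x, rfl⟩ := exists_smul_eq G a b
  have : x⁻¹ * n * x ∈ stabilizer G a := hN (by simpa using ‹N.Normal›.conj_mem n hn x⁻¹)
  rw [mem_stabilizer_iff, mul_smul, mul_smul, inv_smul_eq_iff] at this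
  rw [this, one_smul]

theorem centralizer_le_stabilizer {a : Ω} (hmax : IsCoatom (stabilizer G a))
    [IsMulCommutative (stabilizer G a)] {h : G} (hh : h ∈ stabilizer G a) (h1 : h ≠ 1) :
    Subgroup.centralizer {h} ≤ stabilizer G a := by
  have hle : stabilizer G a ≤ Subgroup.centralizer {h} := (Subgroup.le_centralizer _).trans
    (Subgroup.centralizer_le (Set.singleton_subset_iff.mpr hh))
  refine ((hmax.le_iff.mp hle).resolve_left fun htop => h1 ?_).le
  refine eq_one_of_mem_center_of_smul_eq (Subgroup.mem_center_iff.mpr fun g => ?_) hh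
  have : g ∈ Subgroup.centralizer {h} := htop ▸ Subgroup.mem_top g
  exact Subgroup.mem_centralizer_singleton_iff.mp this

end Pretransitive

section Preprimitive

variable [IsPreprimitive G Ω]

theorem orbit_eq_univ_of_stabilizer_le_normalizer {P : Subgroup G} {β : Ω}
    (hβ : stabilizer G β ≤ Subgroup.normalizer (P : Set G)) (hP : ¬ P ≤ stabilizer G β) :
    orbit P β = Set.univ := by
  have horbit : orbit (P ⊔ stabilizer G β :) β = orbit P β := by
    ext x
    constructor
    · rintro ⟨⟨k, hk⟩, rfl⟩
      rw [← SetLike.mem_coe, Subgroup.coe_mul_of_right_le_normalizer_left _ _ hβ] at hk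
      obtain ⟨y, hy, s, hs, rfl⟩ := hk
      exact ⟨⟨y, hy⟩, by simp [mul_smul, mem_stabilizer_iff.mp hs]⟩
    · rintro ⟨⟨y, hy⟩, rfl⟩
      exact ⟨⟨y, le_sup_left (a := P) hy⟩, rfl⟩
  have hblock := horbit ▸ IsBlock.of_orbit (le_sup_right (a := P) (b := stabilizer G β))
  refine hblock.subsingleton_or_eq_univ.resolve_left fun hsub => hP fun y hy => ?_
  exact hsub ⟨⟨y, hy⟩, rfl⟩ (mem_orbit_self β)

variable [FaithfulSMul G Ω] {ω : Ω}

theorem existsUnique_smul_eq_of_normal {T : Subgroup G} [T.Normal] (hT : T ≠ ⊥)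
    (hdisj : Disjoint T (stabilizer G ω)) (a b : Ω) : ∃! t : T, t • a = b := by
  have : IsPretransitive T Ω := IsQuasiPreprimitive.isPretransitive_of_normal fun hfix =>
    hT (eq_bot_of_normal_of_le_stabilizer (a := ω) fun x hx => by
      simpa using (Set.eq_univ_iff_forall.mp hfix ω) ⟨x, hx⟩)
  obtain ⟨t, rfl⟩ := exists_smul_eq T a b
  refine ⟨t, rfl, fun s hs => ?_⟩
  have hfix : ((t⁻¹ * s : T) : G) ∈ stabilizer G a := by
    rw [mem_stabilizer_iff, Subgroup.coe_mul, mul_smul]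
    exact inv_smul_eq_iff.mpr hs
  have := Subgroup.disjoint_def.mp (disjoint_stabilizer_of_normal hdisj a) (t⁻¹ * s).2 hfix
  rw [← Subgroup.coe_one, Subtype.coe_inj, inv_mul_eq_one] at this
  exact this.symm

theorem exists_regular_elementary_abelian_normal [Finite G] {N : Subgroup G} [N.Normal] {p : ℕ}
    [Fact p.Prime] (hNp : IsPGroup p N) (hN : N ≠ ⊥) (hdisj : Disjoint N (stabilizer G ω)) :
    ∃ T : Subgroup G, T.Normal ∧ (∀ t ∈ T, t ^ p = 1) ∧ (∀ s ∈ T, ∀ t ∈ T, s * t = t * s) ∧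
      (∀ ω₁ ω₂ : Ω, ∃! t : T, t • ω₁ = ω₂) := by
  have : Nontrivial N := (Subgroup.nontrivial_iff_ne_bot N).mpr hN
  have hZ : (Subgroup.center N).map N.subtype ≠ ⊥ := by
    rw [Ne, Subgroup.map_eq_bot_iff_of_injective _ N.subtype_injective]
    exact (Subgroup.nontrivial_iff_ne_bot _).mp hNp.center_nontrivial
  have hT := Subgroup.torsionBy_ne_bot ((hNp.to_subgroup _).map N.subtype) hZ
  refine ⟨_, inferInstance, fun t => Subgroup.pow_eq_one_of_mem_torsionBy,
    fun s hs t ht => setLike_mul_comm (Subgroup.torsionBy_le hs) (Subgroup.torsionBy_le ht),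
    existsUnique_smul_eq_of_normal hT (hdisj.mono_left ?_)⟩
  exact Subgroup.torsionBy_le.trans (Subgroup.map_subtype_le _)

variable [Nontrivial Ω]

theorem eq_of_stabilizer_le_stabilizer [Finite G] (hne : stabilizer G ω ≠ ⊥) {β : Ω}
    (hle : stabilizer G ω ≤ stabilizer G β) : β = ω := by
  obtain ⟨g, rfl⟩ := exists_smul_eq G ω β
  have heq : stabilizer G ω = stabilizer G (g • ω) :=
    Subgroup.eq_of_le_of_card_ge hle (card_stabilizer_eq _ _).le
  have hg : g ∈ Subgroup.normalizer (stabilizer G ω : Set G) := fun h => by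
    conv_rhs => rw [heq]
    simp [mem_stabilizer_iff, mul_smul]
  rcases (IsPreprimitive.isCoatom_stabilizer_of_isPreprimitive G ω).le_iff.mp
      (Subgroup.le_normalizer (H := stabilizer G ω)) with htop | hself
  · have := Subgroup.normalizer_eq_top_iff.mp htop
    exact absurd (eq_bot_of_normal_of_le_stabilizer (le_refl (stabilizer G ω))) hne
  · exact (hself ▸ hg : g ∈ stabilizer G ω)

variable [IsMulCommutative (stabilizer G ω)]

theorem fixedBy_eq_singleton [Finite G] {h : G} (hh : h ∈ stabilizer G ω) (h1 : h ≠ 1) :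
    fixedBy Ω h = {ω} := by
  ext β
  refine ⟨fun hβ => ?_, fun hβ => hβ ▸ hh⟩
  have := isMulCommutative_stabilizer (G := G) (a := ω) β
  have hle : stabilizer G ω ≤ Subgroup.centralizer {h} := (Subgroup.le_centralizer _).trans
    (Subgroup.centralizer_le (Set.singleton_subset_iff.mpr hh))
  refine eq_of_stabilizer_le_stabilizer (fun hbot => h1 ?_) (hle.trans ?_)
  · simpa [hbot] using hh
  · exact centralizer_le_stabilizer (IsPreprimitive.isCoatom_stabilizer_of_isPreprimitive G β) hβ h1

theorem coprime_card_stabilizer_card [Finite G] [Finite Ω] :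
    (Nat.card (stabilizer G ω)).Coprime (Nat.card Ω) := by
  refine Nat.coprime_of_dvd fun q hq hqH hqΩ => ?_
  have := Fact.mk hq
  obtain ⟨h, hh⟩ := exists_prime_orderOf_dvd_card' q hqH
  rw [← Subgroup.orderOf_coe] at hh
  have h1 : (h : G) ≠ 1 := fun e => hq.ne_one (by rw [← hh, e, orderOf_one])
  have hmod := card_modEq_card_fixedBy (Ω := Ω) hh
  rw [fixedBy_eq_singleton h.2 h1, Nat.card_coe_set_eq, Set.ncard_singleton] at hmod
  have h0 : 1 ≡ 0 [MOD q] := hmod.symm.trans (Nat.modEq_zero_iff_dvd.mpr hqΩ)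
  exact hq.ne_one (Nat.dvd_one.mp (Nat.modEq_zero_iff_dvd.mp h0))

theorem conj_eq_of_mem_stabilizer [Finite G] {h g : G} (hh : h ∈ stabilizer G ω)
    (hg : g⁻¹ * h * g ∈ stabilizer G ω) : g⁻¹ * h * g = h := by
  rcases eq_or_ne h 1 with rfl | h1
  · group
  have hfix : g • ω ∈ fixedBy Ω h := by
    rw [mem_stabilizer_iff, mul_smul, mul_smul, inv_smul_eq_iff] at hg
    exact hg
  rw [fixedBy_eq_singleton hh h1] at hfix
  rw [mul_assoc, setLike_mul_comm (s := stabilizer G ω) hh hfix, inv_mul_cancel_left]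

open scoped IsMulCommutative

theorem domRestrict_transfer_stabilizer [Finite G] :
    ⇑((MonoidHom.id (stabilizer G ω)).transfer.domRestrict (stabilizer G ω)) =
      fun x => x ^ Nat.card Ω := by
  funext x
  rw [MonoidHom.domRestrict_apply, MonoidHom.transfer_eq_pow _ _ fun k g hg =>
    conj_eq_of_mem_stabilizer (Subgroup.pow_mem _ x.2 k) hg]
  ext
  simp [index_stabilizer_of_transitive]

theorem isComplement'_ker_transfer_stabilizer [Finite G] [Finite Ω] :
    (MonoidHom.id (stabilizer G ω)).transfer.ker.IsComplement' (stabilizer G ω) := by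
  refine MonoidHom.isComplement'_ker_of_bijective_domRestrict _ ?_
  rw [domRestrict_transfer_stabilizer]
  exact Nat.Coprime.pow_left_bijective coprime_card_stabilizer_card

theorem exists_eq_stabilizer [Finite G] [Finite Ω] (hne : stabilizer G ω ≠ ⊥) {L : Subgroup G}
    [IsMulCommutative L] (hL : Nat.card L = Nat.card (stabilizer G ω)) :
    ∃ β : Ω, L = stabilizer G β := by
  obtain ⟨q, hq, hqL⟩ := Nat.exists_prime_and_dvd
    (hL ▸ ((Subgroup.one_lt_card_iff_ne_bot _).mpr hne).ne')
  have := Fact.mk hq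
  obtain ⟨y, hy⟩ := exists_prime_orderOf_dvd_card' q hqL
  rw [← Subgroup.orderOf_coe] at hy
  have hqΩ : ¬ q ∣ Nat.card Ω := fun h =>
    hq.ne_one (Nat.eq_one_of_dvd_coprimes coprime_card_stabilizer_card (hL ▸ hqL) h)
  obtain ⟨β, hβ⟩ : (fixedBy Ω (y : G)).Nonempty := by
    refine Set.nonempty_of_ncard_ne_zero fun h0 => hqΩ ?_
    rw [← Nat.modEq_zero_iff_dvd, ← h0, ← Nat.card_coe_set_eq]
    exact card_modEq_card_fixedBy hy
  have hy1 : (y : G) ≠ 1 := fun e => hq.ne_one (by rw [← hy, e, orderOf_one])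
  have := isMulCommutative_stabilizer (G := G) (a := ω) β
  refine ⟨β, Subgroup.eq_of_le_of_card_ge ?_ ?_⟩
  · exact ((Subgroup.le_centralizer L).trans (Subgroup.centralizer_le
      (Set.singleton_subset_iff.mpr y.2))).trans (centralizer_le_stabilizer
        (IsPreprimitive.isCoatom_stabilizer_of_isPreprimitive G β) hβ hy1)
  · rw [hL, card_stabilizer_eq β ω]

theorem isPGroup_ker_of_isComplement' [Finite G] [Finite Ω] {A : Type*} [CommGroup A]
    (f : G →* A) (hf : f.ker.IsComplement' (stabilizer G ω)) {p : ℕ} [Fact p.Prime]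
    (hp : p ∣ Nat.card Ω) : IsPGroup p f.ker := by
  have hNcard := card_eq_of_isComplement'_stabilizer hf
  obtain ⟨P⟩ : Nonempty (Sylow p f.ker) := inferInstance
  set P' := (P : Subgroup f.ker).map f.ker.subtype
  have hcop : (Nat.card f.ker).Coprime f.ker.index := by
    rw [hf.symm.index_eq_card, hNcard]
    exact coprime_card_stabilizer_card.symm
  obtain ⟨L, hLM, hL⟩ :=
    Subgroup.exists_isComplement'_le_of_coprime hcop (Sylow.normalizer_sup_eq_top P)
  obtain ⟨β, hβ⟩ : ∃ β : Ω, stabilizer G β ≤ Subgroup.normalizer (P' : Set G) := by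
    by_cases hH : stabilizer G ω = ⊥
    · exact ⟨ω, hH ▸ bot_le⟩
    have := Subgroup.isMulCommutative_of_disjoint_ker f hL.disjoint
    obtain ⟨β, rfl⟩ := exists_eq_stabilizer hH (L := L) (by
      rw [← hL.symm.index_eq_card, hf.symm.index_eq_card])
    exact ⟨β, hLM⟩
  have hPβ : ¬ P' ≤ stabilizer G β := fun hle => by
    refine P.ne_bot_of_dvd_card (hNcard ▸ hp) (Subgroup.map_injective f.ker.subtype_injective ?_)
    rw [Subgroup.map_bot, eq_bot_iff]
    exact fun x hx => Subgroup.disjoint_def.mp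
      (disjoint_stabilizer_of_normal hf.disjoint β) (Subgroup.map_subtype_le _ hx) (hle hx)
  have horbit := orbit_eq_univ_of_stabilizer_le_normalizer hβ hPβ
  have hP'N : P' = f.ker := Subgroup.eq_of_le_of_card_ge (Subgroup.map_subtype_le _) <| by
    rw [hNcard, ← Nat.card_univ, ← horbit]
    exact Nat.card_le_card_of_surjective (fun x : P' => ⟨x • β, x, rfl⟩) fun ⟨_, x, rfl⟩ => ⟨x, rfl⟩
  exact hP'N ▸ P.2.map f.ker.subtype

theorem exists_normal_isPGroup_isComplement' [Finite G] [Finite Ω] {p : ℕ} [Fact p.Prime]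
    (hp : p ∣ Nat.card Ω) :
    ∃ N : Subgroup G, N.Normal ∧ IsPGroup p N ∧ N.IsComplement' (stabilizer G ω) :=
  ⟨_, inferInstance, isPGroup_ker_of_isComplement' _ isComplement'_ker_transfer_stabilizer hp,
    isComplement'_ker_transfer_stabilizer⟩

end Preprimitive

end MulAction

/-- A finite primitive permutation group with an abelian point-stabiliser is
of affine type: it contains a regular normal elementary abelian `p`-subgroup. -/
theorem stmt9 {G Ω : Type*} [Group G] [Fintype G] [Fintype Ω] [MulAction G Ω]
    [FaithfulSMul G Ω] (hprim : IsPrimitiveAction G Ω) (ω : Ω)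
    (hab : ∀ g ∈ stabilizer G ω, ∀ h ∈ stabilizer G ω, g * h = h * g) :
    ∃ p : ℕ, p.Prime ∧ ∃ T : Subgroup G, T.Normal ∧
      (∀ t ∈ T, t ^ p = 1) ∧ (∀ s ∈ T, ∀ t ∈ T, s * t = t * s) ∧
      (∀ ω₁ ω₂ : Ω, ∃! t : T, t • ω₁ = ω₂) := by
  have := hprim.isPreprimitive
  have : IsMulCommutative (stabilizer G ω) := ⟨⟨fun a b => Subtype.ext (hab _ a.2 _ b.2)⟩⟩
  rcases subsingleton_or_nontrivial Ω with hΩ | hΩ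
  · refine ⟨2, Nat.prime_two, ⊥, inferInstance, by simp, by simp, fun a b => ?_⟩
    exact ⟨1, Subsingleton.elim _ _, fun t _ => Subsingleton.elim _ _⟩
  obtain ⟨p, hp, hpΩ⟩ := Nat.exists_prime_and_dvd (Finite.one_lt_card (α := Ω)).ne'
  have := Fact.mk hp
  obtain ⟨N, _, hNp, hN⟩ := exists_normal_isPGroup_isComplement' (G := G) (ω := ω) hpΩ
  have hN1 : N ≠ ⊥ := by
    rw [← Subgroup.one_lt_card_iff_ne_bot, card_eq_of_isComplement'_stabilizer hN]
    exact Finite.one_lt_card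
  exact ⟨p, hp, exists_regular_elementary_abelian_normal hNp hN1 hN.disjoint⟩
end

section
/- A maximal subgroup of a finite group that is a non-identity core-free maximal 2-subgroup is a Sylow 2-subgroup. -/
/-!
A maximal subgroup `H` that is not normal is self-normalising. Put `H` in a Sylow 2-subgroup `P`;
then `H` is self-normalising in `P` too, and since the nilpotent group `P` satisfies the normaliser
condition, `H` cannot be a proper subgroup of `P`.
-/

namespace Subgroup

variable {G : Type*} [Group G]

theorem normalizer_eq_self_of_isCoatom {H : Subgroup G} (hmax : IsCoatom H) (hH : ¬ H.Normal) :
    normalizer (H : Set G) = H := by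
  refine (H.le_normalizer.eq_or_lt.resolve_right fun hlt => hH ?_).symm
  exact normalizer_eq_top_iff.mp (hmax.2 _ hlt)

theorem not_normal_of_normalCore_eq_bot {H : Subgroup G} (hbot : H ≠ ⊥)
    (hcore : H.normalCore = ⊥) : ¬ H.Normal := fun _ => hbot (H.normalCore_eq_self ▸ hcore)

end Subgroup

open Subgroup in
theorem IsPGroup.exists_sylow_eq_of_normalizer_eq_self {G : Type*} [Group G] [Finite G] {p : ℕ}
    [Fact p.Prime] {H : Subgroup G} (hp : IsPGroup p H) (hH : normalizer (H : Set G) = H) :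
    ∃ P : Sylow p G, (P : Subgroup G) = H := by
  obtain ⟨P, hHP⟩ := hp.exists_le_sylow
  have hself : normalizer (H.subgroupOf P : Set P) = H.subgroupOf P := by
    rw [← subgroupOf_normalizer_eq hHP, hH]
  have : Group.IsNilpotent P := P.isPGroup'.isNilpotent
  have htop : H.subgroupOf P = ⊤ :=
    normalizerCondition_iff_only_full_group_self_normalizing.mp
      Group.normalizerCondition_of_isNilpotent _ hself
  exact ⟨P, le_antisymm (subgroupOf_eq_top.mp htop) hHP⟩

/-- A maximal subgroup of a finite group that is a non-identity core-free
2-subgroup is a Sylow 2-subgroup. -/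
theorem stmt13 {G : Type*} [Group G] [Fintype G] (H : Subgroup G)
    (hmax : IsCoatom H) (h2 : IsPGroup 2 H) (hbot : H ≠ ⊥)
    (hcore : H.normalCore = ⊥) :
    ∃ P : Sylow 2 G, (P : Subgroup G) = H :=
  h2.exists_sylow_eq_of_normalizer_eq_self
    (Subgroup.normalizer_eq_self_of_isCoatom hmax
      (Subgroup.not_normal_of_normalCore_eq_bot hbot hcore))
end

section
/- Assume Notation: R = Dic(A,y,x) with R ≇ Q₈ × C₂^ℓ, ι the automorphism fixing A pointwise and inverting R \ A, B = R ⋊ ⟨ι⟩, C = A × ⟨ι⟩, D = A ⋊ ⟨ιx⟩. Then A, C, D and R are the only proper subgroups of B containing A. -/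
/-- Notation 2 of the paper: `B = R ⋊ ⟨ι⟩` where `R = Dic(A,y,x)` is a
generalised dicyclic group not isomorphic to `Q₈ × C₂^ℓ` and `ι` is the
automorphism of `R` fixing `A` pointwise and inverting `R \ A`.  Then
`A`, `C = A × ⟨ι⟩`, `D = A ⋊ ⟨ιx⟩` and `R` are the only proper subgroups
of `B` containing `A`. -/
theorem stmt14 {B : Type*} [Group B] [Fintype B] (A : Subgroup B) (y x ι : B)
    (hAcomm : ∀ a ∈ A, ∀ b ∈ A, a * b = b * a)
    (hexp : ∃ a ∈ A, a ^ 2 ≠ 1)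
    (hy : y ∈ A) (hy2 : y ^ 2 = 1) (hy1 : y ≠ 1)
    (hx : x ∉ A) (hx2 : x ^ 2 = y)
    (hconj : ∀ a ∈ A, x⁻¹ * a * x = a⁻¹)
    (hAind : A.index = 4)
    (hRind : (A ⊔ Subgroup.zpowers x).index = 2)
    (hι2 : ι ^ 2 = 1) (hι1 : ι ≠ 1) (hιR : ι ∉ A ⊔ Subgroup.zpowers x)
    (hιA : ∀ a ∈ A, ι * a = a * ι)
    (hιinv : ∀ r ∈ A ⊔ Subgroup.zpowers x, r ∉ A → ι⁻¹ * r * ι = r⁻¹)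
    (hnotQ : ¬ ∃ ℓ : ℕ, Nonempty ((A ⊔ Subgroup.zpowers x : Subgroup B) ≃*
      QuaternionGroup 2 × Multiplicative (Fin ℓ → ZMod 2))) :
    ∀ H : Subgroup B, A ≤ H → H ≠ ⊤ →
      H = A ∨ H = A ⊔ Subgroup.zpowers ι ∨ H = A ⊔ Subgroup.zpowers (ι * x) ∨
        H = A ⊔ Subgroup.zpowers x := by
  classical
  -- basic membership facts in `R = A ⊔ ⟨x⟩`
  have hxR : x ∈ A ⊔ Subgroup.zpowers x :=
    Subgroup.mem_sup_right (Subgroup.mem_zpowers x)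
  have hAR : A ≤ A ⊔ Subgroup.zpowers x := le_sup_left
  -- the four cosets of `A` cover `B`
  have hcover : ∀ b : B, b ∈ A ∨ x⁻¹ * b ∈ A ∨ ι⁻¹ * b ∈ A ∨ (ι * x)⁻¹ * b ∈ A := by
    haveI : Fintype (B ⧸ A) := Fintype.ofFinite _
    have hcard : Fintype.card (B ⧸ A) = 4 := by
      rw [← Nat.card_eq_fintype_card]
      exact hAind
    intro b
    -- the four cosets are distinct
    have h1x : ((1 : B) : B ⧸ A) ≠ (x : B ⧸ A) := by
      intro h
      rw [QuotientGroup.eq] at h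
      simp only [inv_one, one_mul] at h
      exact hx h
    have h1ι : ((1 : B) : B ⧸ A) ≠ (ι : B ⧸ A) := by
      intro h
      rw [QuotientGroup.eq] at h
      simp only [inv_one, one_mul] at h
      exact hιR (hAR h)
    have h1ιx : ((1 : B) : B ⧸ A) ≠ ((ι * x : B) : B ⧸ A) := by
      intro h
      rw [QuotientGroup.eq] at h
      simp only [inv_one, one_mul] at h
      have : ι = (ι * x) * x⁻¹ := by group
      exact hιR (this ▸ Subgroup.mul_mem _ (hAR h) (Subgroup.inv_mem _ hxR))
    have hxι : ((x : B) : B ⧸ A) ≠ (ι : B ⧸ A) := by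
      intro h
      rw [QuotientGroup.eq] at h
      have : ι = x * (x⁻¹ * ι) := by group
      exact hιR (this ▸ Subgroup.mul_mem _ hxR (hAR h))
    have hxιx : ((x : B) : B ⧸ A) ≠ ((ι * x : B) : B ⧸ A) := by
      intro h
      rw [QuotientGroup.eq] at h
      have : ι = x * (x⁻¹ * (ι * x)) * x⁻¹ := by group
      exact hιR (this ▸ Subgroup.mul_mem _
        (Subgroup.mul_mem _ hxR (hAR h)) (Subgroup.inv_mem _ hxR))
    have hιιx : ((ι : B) : B ⧸ A) ≠ ((ι * x : B) : B ⧸ A) := by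
      intro h
      rw [QuotientGroup.eq] at h
      have : ι⁻¹ * (ι * x) = x := by group
      rw [this] at h
      exact hx h
    -- a finset with the four cosets
    set s : Finset (B ⧸ A) :=
      {((1 : B) : B ⧸ A), (x : B ⧸ A), (ι : B ⧸ A), ((ι * x : B) : B ⧸ A)} with hs
    have hscard : s.card = 4 := by
      rw [hs]
      rw [Finset.card_insert_of_notMem (by simp [h1x, h1ι, h1ιx]),
        Finset.card_insert_of_notMem (by simp [hxι, hxιx]),
        Finset.card_insert_of_notMem (by simp [hιιx])]
      simp
    have hsuniv : s = Finset.univ := Finset.eq_univ_of_card s (by rw [hscard, hcard])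
    have hb : (b : B ⧸ A) ∈ s := by rw [hsuniv]; exact Finset.mem_univ _
    rw [hs] at hb
    simp only [Finset.mem_insert, Finset.mem_singleton] at hb
    rcases hb with hb | hb | hb | hb
    · left
      have := (QuotientGroup.eq).mp hb.symm
      simpa using this
    · right; left
      exact (QuotientGroup.eq).mp hb.symm
    · right; right; left
      exact (QuotientGroup.eq).mp hb.symm
    · right; right; right
      exact (QuotientGroup.eq).mp hb.symm
  intro H hAH hHtop
  -- if all three of x, ι, ι*x are in H, then H = ⊤
  have htop : x ∈ H → ι ∈ H → H = ⊤ := by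
    intro hxH hιH
    rw [Subgroup.eq_top_iff']
    intro b
    rcases hcover b with hb | hb | hb | hb
    · exact hAH hb
    · have : b = x * (x⁻¹ * b) := by group
      rw [this]; exact H.mul_mem hxH (hAH hb)
    · have : b = ι * (ι⁻¹ * b) := by group
      rw [this]; exact H.mul_mem hιH (hAH hb)
    · have : b = (ι * x) * ((ι * x)⁻¹ * b) := by group
      rw [this]; exact H.mul_mem (H.mul_mem hιH hxH) (hAH hb)
  by_cases hxH : x ∈ H
  · by_cases hιH : ι ∈ H
    · exact absurd (htop hxH hιH) hHtop
    · -- H = R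
      right; right; right
      apply le_antisymm
      · intro b hb
        rcases hcover b with h | h | h | h
        · exact hAR h
        · have : b = x * (x⁻¹ * b) := by group
          rw [this]; exact Subgroup.mul_mem _ hxR (hAR h)
        · exact absurd (htop hxH (by
            have : ι = b * (ι⁻¹ * b)⁻¹ := by group
            rw [this]; exact H.mul_mem hb (H.inv_mem (hAH h)))) hHtop
        · -- ι * x ∈ H, hence ι ∈ H, contradiction
          have hιxH : ι * x ∈ H := by
            have : ι * x = b * ((ι * x)⁻¹ * b)⁻¹ := by group
            rw [this]; exact H.mul_mem hb (H.inv_mem (hAH h))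
          have : ι ∈ H := by
            have h2 : ι = (ι * x) * x⁻¹ := by group
            rw [h2]; exact H.mul_mem hιxH (H.inv_mem hxH)
          exact absurd (htop hxH this) hHtop
      · exact sup_le hAH (by
          rw [Subgroup.zpowers_le]; exact hxH)
  · by_cases hιH : ι ∈ H
    · by_cases hιxH : ι * x ∈ H
      · exact absurd (htop (by
          have : x = ι⁻¹ * (ι * x) := by group
          rw [this]; exact H.mul_mem (H.inv_mem hιH) hιxH) hιH) hHtop
      · -- H = A ⊔ ⟨ι⟩
        right; left
        apply le_antisymm
        · intro b hb
          rcases hcover b with h | h | h | h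
          · exact Subgroup.mem_sup_left h
          · exact absurd (by
              have : x = b * (x⁻¹ * b)⁻¹ := by group
              rw [this]; exact H.mul_mem hb (H.inv_mem (hAH h))) hxH
          · have : b = ι * (ι⁻¹ * b) := by group
            rw [this]
            exact Subgroup.mul_mem _ (Subgroup.mem_sup_right (Subgroup.mem_zpowers ι))
              (Subgroup.mem_sup_left h)
          · exact absurd (by
              have : ι * x = b * ((ι * x)⁻¹ * b)⁻¹ := by group
              rw [this]; exact H.mul_mem hb (H.inv_mem (hAH h))) hιxH
        · exact sup_le hAH (by rw [Subgroup.zpowers_le]; exact hιH)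
    · by_cases hιxH : ι * x ∈ H
      · -- H = A ⊔ ⟨ι * x⟩
        right; right; left
        apply le_antisymm
        · intro b hb
          rcases hcover b with h | h | h | h
          · exact Subgroup.mem_sup_left h
          · exact absurd (by
              have : x = b * (x⁻¹ * b)⁻¹ := by group
              rw [this]; exact H.mul_mem hb (H.inv_mem (hAH h))) hxH
          · exact absurd (by
              have : ι = b * (ι⁻¹ * b)⁻¹ := by group
              rw [this]; exact H.mul_mem hb (H.inv_mem (hAH h))) hιH
          · have : b = (ι * x) * ((ι * x)⁻¹ * b) := by group
            rw [this]
            exact Subgroup.mul_mem _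
              (Subgroup.mem_sup_right (Subgroup.mem_zpowers (ι * x)))
              (Subgroup.mem_sup_left h)
        · exact sup_le hAH (by rw [Subgroup.zpowers_le]; exact hιxH)
      · -- H = A
        left
        apply le_antisymm
        · intro b hb
          rcases hcover b with h | h | h | h
          · exact h
          · exact absurd (by
              have : x = b * (x⁻¹ * b)⁻¹ := by group
              rw [this]; exact H.mul_mem hb (H.inv_mem (hAH h))) hxH
          · exact absurd (by
              have : ι = b * (ι⁻¹ * b)⁻¹ := by group
              rw [this]; exact H.mul_mem hb (H.inv_mem (hAH h))) hιH
          · exact absurd (by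
              have : ι * x = b * ((ι * x)⁻¹ * b)⁻¹ := by group
              rw [this]; exact H.mul_mem hb (H.inv_mem (hAH h))) hιxH
        · exact hAH
end

section
/- Assume R = Dic(A,y,x) with R ≇ Q₈ × C₂^ℓ and B = R ⋊ ⟨ι⟩. If X ≤ R, b ∈ B, and X^b ∩ X = 1, then X = 1. -/
/-- Notation 2 of the paper: `B = R ⋊ ⟨ι⟩` where `R = Dic(A,y,x)` is a
generalised dicyclic group not isomorphic to `Q₈ × C₂^ℓ`.  If `X ≤ R`,
`b ∈ B` and `X^b ∩ X = 1`, then `X = 1`. -/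
theorem stmt15 {B : Type*} [Group B] [Fintype B] (A : Subgroup B) (y x ι : B)
    (hAcomm : ∀ a ∈ A, ∀ b ∈ A, a * b = b * a)
    (hexp : ∃ a ∈ A, a ^ 2 ≠ 1)
    (hy : y ∈ A) (hy2 : y ^ 2 = 1) (hy1 : y ≠ 1)
    (hx : x ∉ A) (hx2 : x ^ 2 = y)
    (hconj : ∀ a ∈ A, x⁻¹ * a * x = a⁻¹)
    (hAind : A.index = 4)
    (hRind : (A ⊔ Subgroup.zpowers x).index = 2)
    (hι2 : ι ^ 2 = 1) (hι1 : ι ≠ 1) (hιR : ι ∉ A ⊔ Subgroup.zpowers x)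
    (hιA : ∀ a ∈ A, ι * a = a * ι)
    (hιinv : ∀ r ∈ A ⊔ Subgroup.zpowers x, r ∉ A → ι⁻¹ * r * ι = r⁻¹)
    (hnotQ : ¬ ∃ ℓ : ℕ, Nonempty ((A ⊔ Subgroup.zpowers x : Subgroup B) ≃*
      QuaternionGroup 2 × Multiplicative (Fin ℓ → ZMod 2)))
    (X : Subgroup B) (hX : X ≤ A ⊔ Subgroup.zpowers x) (b : B)
    (hXb : X.map (MulAut.conj b).toMonoidHom ⊓ X = ⊥) :
    X = ⊥ := by
  set R' : Subgroup B := A ⊔ Subgroup.zpowers x with hR'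
  -- y is an involution, so y⁻¹ = y
  have hyinv : y⁻¹ = y := by
    have : y * y = 1 := by rw [← pow_two]; exact hy2
    exact inv_eq_of_mul_eq_one_right this
  -- x inverts A from the left as well
  have hxc : ∀ c ∈ A, x * c * x⁻¹ = c⁻¹ := by
    intro c hc
    have h := hconj c⁻¹ (inv_mem hc)
    rw [inv_inv] at h
    conv_lhs => rw [← h]
    group
  -- the subgroup of elements acting on A by identity or inversion
  set S : Subgroup B :=
    { carrier := {g | (∀ c ∈ A, g * c * g⁻¹ = c) ∨ (∀ c ∈ A, g * c * g⁻¹ = c⁻¹)}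
      one_mem' := Or.inl (by intro c _; group)
      mul_mem' := by
        rintro g₁ g₂ (h₁ | h₁) (h₂ | h₂)
        · refine Or.inl fun c hc => ?_
          have e : g₁ * g₂ * c * (g₁ * g₂)⁻¹ = g₁ * (g₂ * c * g₂⁻¹) * g₁⁻¹ := by group
          rw [e, h₂ c hc, h₁ c hc]
        · refine Or.inr fun c hc => ?_
          have e : g₁ * g₂ * c * (g₁ * g₂)⁻¹ = g₁ * (g₂ * c * g₂⁻¹) * g₁⁻¹ := by group
          rw [e, h₂ c hc, h₁ c⁻¹ (inv_mem hc)]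
        · refine Or.inr fun c hc => ?_
          have e : g₁ * g₂ * c * (g₁ * g₂)⁻¹ = g₁ * (g₂ * c * g₂⁻¹) * g₁⁻¹ := by group
          rw [e, h₂ c hc, h₁ c hc]
        · refine Or.inl fun c hc => ?_
          have e : g₁ * g₂ * c * (g₁ * g₂)⁻¹ = g₁ * (g₂ * c * g₂⁻¹) * g₁⁻¹ := by group
          rw [e, h₂ c hc, h₁ c⁻¹ (inv_mem hc), inv_inv]
      inv_mem' := by
        rintro g (h | h)
        · refine Or.inl fun c hc => ?_
          have := h c hc
          have e : g⁻¹ * (g * c * g⁻¹) * g = c := by group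
          rw [this] at e
          rw [inv_inv]; exact e
        · refine Or.inr fun c hc => ?_
          have := h c⁻¹ (inv_mem hc)
          rw [inv_inv] at this
          have e : g⁻¹ * (g * c⁻¹ * g⁻¹) * g = c⁻¹ := by group
          rw [this] at e
          rw [inv_inv]; exact e } with hSdef
  -- A, x, ι all lie in S
  have hAS : A ≤ S := by
    intro a ha
    refine Or.inl fun c hc => ?_
    rw [hAcomm a ha c hc]; group
  have hxS : x ∈ S := Or.inr hxc
  have hιS : ι ∈ S := by
    refine Or.inl fun c hc => ?_
    rw [hιA c hc]; group
  -- B is generated by R' and ι, hence S = ⊤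
  have hxR' : x ∈ R' := Subgroup.mem_sup_right (Subgroup.mem_zpowers x)
  have hTtop : R' ⊔ Subgroup.zpowers ι = ⊤ := by
    set T : Subgroup B := R' ⊔ Subgroup.zpowers ι with hT
    have hle : R' ≤ T := le_sup_left
    have hmul := Subgroup.relIndex_mul_index hle
    rw [hRind] at hmul
    have hdvd : T.index ∣ 2 := ⟨R'.relIndex T, by rw [← hmul]; ring⟩
    rcases (Nat.dvd_prime Nat.prime_two).mp hdvd with h1 | h1
    · exact Subgroup.index_eq_one.mp h1
    · exfalso
      have : R'.relIndex T = 1 := by rw [h1] at hmul; omega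
      have hTle : T ≤ R' := Subgroup.relIndex_eq_one.mp this
      exact hιR (hTle (Subgroup.mem_sup_right (Subgroup.mem_zpowers ι)))
  have hStop : ∀ g : B, g ∈ S := by
    intro g
    have : (⊤ : Subgroup B) ≤ S := by
      rw [← hTtop]
      refine sup_le (sup_le hAS ?_) ?_
      · exact (Subgroup.zpowers_le).mpr hxS
      · exact (Subgroup.zpowers_le).mpr hιS
    exact this (Subgroup.mem_top g)
  -- main case split
  by_cases hXA : X ≤ A
  · -- X ≤ A : conjugation by b fixes X setwise
    have hmono : X ≤ X.map (MulAut.conj b).toMonoidHom := by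
      intro g hg
      rcases hStop b with hb | hb
      · exact ⟨g, hg, by simpa using hb g (hXA hg)⟩
      · refine ⟨g⁻¹, inv_mem hg, ?_⟩
        have := hb g⁻¹ (inv_mem (hXA hg))
        rw [inv_inv] at this
        simpa using this
    have : X ≤ ⊥ := by
      rw [← hXb]
      exact le_inf hmono le_rfl
    exact le_bot_iff.mp this
  · -- X contains an element g of R' \ A, whence y ∈ X, contradiction
    exfalso
    obtain ⟨g, hgX, hgA⟩ := SetLike.not_le_iff_exists.mp hXA
    have hgR' : g ∈ R' := hX hgX
    -- A has index 2 in R'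
    have hrel : A.relIndex R' * R'.index = A.index := Subgroup.relIndex_mul_index le_sup_left
    rw [hRind, hAind] at hrel
    have hrel2 : A.relIndex R' = 2 := by omega
    have hi2 : (A.subgroupOf R').index = 2 := hrel2
    have hgx : g * x ∈ A := by
      have h := (Subgroup.mul_mem_iff_of_index_two hi2
        (a := ⟨g, hgR'⟩) (b := ⟨x, hxR'⟩)).mpr
      have hg' : (⟨g, hgR'⟩ : R') ∉ A.subgroupOf R' := by
        simpa [Subgroup.mem_subgroupOf] using hgA
      have hx' : (⟨x, hxR'⟩ : R') ∉ A.subgroupOf R' := by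
        simpa [Subgroup.mem_subgroupOf] using hx
      have := h (iff_of_false hg' hx')
      simpa [Subgroup.mem_subgroupOf] using this
    -- g² = y
    have key : g * g = y := by
      have hgeq : g = (g * x) * x⁻¹ := by group
      have h1 : x⁻¹ * (g * x) * x = (g * x)⁻¹ := hconj _ hgx
      have h2 : x⁻¹ * (g * x) = (g * x)⁻¹ * x⁻¹ := by
        have : x⁻¹ * (g * x) = (x⁻¹ * (g * x) * x) * x⁻¹ := by group
        rw [this, h1]
      calc g * g = (g * x) * (x⁻¹ * (g * x)) * x⁻¹ := by group
        _ = (g * x) * ((g * x)⁻¹ * x⁻¹) * x⁻¹ := by rw [h2]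
        _ = (x ^ 2)⁻¹ := by group
        _ = y := by rw [hx2, hyinv]
    have hyX : y ∈ X := key ▸ mul_mem hgX hgX
    -- y is fixed by conjugation by b
    have hby : b * y * b⁻¹ = y := by
      rcases hStop b with hb | hb
      · exact hb y hy
      · rw [hb y hy, hyinv]
    have hymap : y ∈ X.map (MulAut.conj b).toMonoidHom := ⟨y, hyX, by simpa using hby⟩
    have : y ∈ (⊥ : Subgroup B) := hXb ▸ ⟨hymap, hyX⟩
    exact hy1 (Subgroup.mem_bot.mp this)
end

section
/- Assume R = Dic(A,y,x) with R ≇ Q₈ × C₂^ℓ and B = R ⋊ ⟨ι⟩. Then R is a characteristic subgroup of B. -/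
/-- Notation 2 of the paper: `B = R ⋊ ⟨ι⟩` where `R = Dic(A,y,x)` is a
generalised dicyclic group not isomorphic to `Q₈ × C₂^ℓ`.  Then `R` is a
characteristic subgroup of `B`. -/
theorem stmt16 {B : Type*} [Group B] [Fintype B] (A : Subgroup B) (y x ι : B)
    (hAcomm : ∀ a ∈ A, ∀ b ∈ A, a * b = b * a)
    (hexp : ∃ a ∈ A, a ^ 2 ≠ 1)
    (hy : y ∈ A) (hy2 : y ^ 2 = 1) (hy1 : y ≠ 1)
    (hx : x ∉ A) (hx2 : x ^ 2 = y)
    (hconj : ∀ a ∈ A, x⁻¹ * a * x = a⁻¹)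
    (hAind : A.index = 4)
    (hRind : (A ⊔ Subgroup.zpowers x).index = 2)
    (hι2 : ι ^ 2 = 1) (hι1 : ι ≠ 1) (hιR : ι ∉ A ⊔ Subgroup.zpowers x)
    (hιA : ∀ a ∈ A, ι * a = a * ι)
    (hιinv : ∀ r ∈ A ⊔ Subgroup.zpowers x, r ∉ A → ι⁻¹ * r * ι = r⁻¹)
    (hnotQ : ¬ ∃ ℓ : ℕ, Nonempty ((A ⊔ Subgroup.zpowers x : Subgroup B) ≃*
      QuaternionGroup 2 × Multiplicative (Fin ℓ → ZMod 2))) :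
    (A ⊔ Subgroup.zpowers x).Characteristic := by
  set R : Subgroup B := A ⊔ Subgroup.zpowers x with hRdef
  have hALE : A ≤ R := le_sup_left
  have hxR : x ∈ R := Subgroup.mem_sup_right (Subgroup.mem_zpowers x)
  have hxx : x * x = y := by rw [← pow_two]; exact hx2
  have hyy : y * y = 1 := by rw [← pow_two]; exact hy2
  have hyinv : y⁻¹ = y := inv_eq_of_mul_eq_one_right hyy
  have hιι : ι * ι = 1 := by rw [← pow_two]; exact hι2
  have hιinv' : ι⁻¹ = ι := inv_eq_of_mul_eq_one_right hιι
  -- x * a = a⁻¹ * x for a ∈ A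
  have hxa : ∀ a ∈ A, x * a = a⁻¹ * x := by
    intro a ha
    have h := hconj a⁻¹ (inv_mem ha)
    rw [inv_inv] at h
    calc x * a = x * (x⁻¹ * a⁻¹ * x) := by rw [h]
    _ = a⁻¹ * x := by group
  -- ι * u = u⁻¹ * ι for u ∈ R \ A
  have hιu : ∀ u ∈ R, u ∉ A → ι * u = u⁻¹ * ι := by
    intro u hu huA
    have h := hιinv u hu huA
    rw [hιinv'] at h
    calc ι * u = (ι * u * ι) * ι⁻¹ := by group
    _ = u⁻¹ * ι := by rw [h, hιinv']
  -- product of two elements of R \ A lies in A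
  have hArel : A.relIndex R = 2 := by
    have h := Subgroup.relIndex_mul_index hALE
    rw [hAind, hRind] at h
    omega
  have hAmul : ∀ u ∈ R, ∀ v ∈ R, u ∉ A → v ∉ A → u * v ∈ A := by
    intro u hu v hv huA hvA
    have h2 : (A.subgroupOf R).index = 2 := hArel
    have := (Subgroup.mul_mem_iff_of_index_two h2 (a := ⟨u, hu⟩) (b := ⟨v, hv⟩)).2
      (by simp [Subgroup.mem_subgroupOf, huA, hvA])
    simpa [Subgroup.mem_subgroupOf] using this
  -- product of two elements outside R lies in R
  have hRmul : ∀ u v : B, u ∉ R → v ∉ R → u * v ∈ R := by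
    intro u v hu hv
    exact (Subgroup.mul_mem_iff_of_index_two hRind).2 (by simp [hu, hv])
  -- c * a = a⁻¹ * c for c ∈ R \ A, a ∈ A
  have hca : ∀ c ∈ R, c ∉ A → ∀ a ∈ A, c * a = a⁻¹ * c := by
    intro c hc hcA a ha
    have hxinvA : x⁻¹ ∉ A := fun h => hx (by simpa using inv_mem h)
    obtain ⟨b, hbA, hceq⟩ : ∃ b ∈ A, c = b * x :=
      ⟨c * x⁻¹, hAmul c hc x⁻¹ (inv_mem hxR) hcA hxinvA, by group⟩
    calc c * a = b * (x * a) := by rw [hceq]; group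
    _ = b * (a⁻¹ * x) := by rw [hxa a ha]
    _ = (a⁻¹ * b) * x := by
        rw [← mul_assoc, hAcomm b hbA a⁻¹ (inv_mem ha)]
    _ = a⁻¹ * c := by rw [hceq]; group
  -- squares of elements of R \ A are y
  have hsq : ∀ c ∈ R, c ∉ A → c * c = y := by
    intro c hc hcA
    have hxinvA : x⁻¹ ∉ A := fun h => hx (by simpa using inv_mem h)
    obtain ⟨a, haA, hceq⟩ : ∃ a ∈ A, c = a * x :=
      ⟨c * x⁻¹, hAmul c hc x⁻¹ (inv_mem hxR) hcA hxinvA, by group⟩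
    calc c * c = a * (x * a) * x := by rw [hceq]; group
    _ = a * (a⁻¹ * x) * x := by rw [hxa a haA]
    _ = x * x := by group
    _ = y := hxx
  -- squares of elements of (R \ A) * ι are 1
  have hsq1 : ∀ s ∈ R, s ∉ A → (s * ι) * (s * ι) = 1 := by
    intro s hs hsA
    calc (s * ι) * (s * ι) = s * (ι * s) * ι := by group
    _ = s * (s⁻¹ * ι) * ι := by rw [hιu s hs hsA]
    _ = ι * ι := by group
    _ = 1 := hιι
  -- MAIN LEMMA 1: elements outside R either square to 1 or commute with all
  -- square roots of their square.
  have main1 : ∀ b : B, b ∉ R →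
      b * b = 1 ∨ ∀ c : B, c * c = b * b → c * b = b * c := by
    intro b hb
    have hrR : b * ι ∈ R := hRmul b ι hb hιR
    set r : B := b * ι with hrdef
    have hbeq : b = r * ι := by rw [hrdef, mul_assoc, hιι, mul_one]
    by_cases hrA : r ∈ A
    · -- b = r * ι with r ∈ A
      have hbb : b * b = r * r := by
        calc b * b = r * (ι * r) * ι := by rw [hbeq]; group
        _ = r * (r * ι) * ι := by rw [hιA r hrA]
        _ = (r * r) * (ι * ι) := by group
        _ = r * r := by rw [hιι, mul_one]
      by_cases hb2 : b * b = 1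
      · exact Or.inl hb2
      right
      intro c hc
      have hrr1 : r * r ≠ 1 := by rw [← hbb]; exact hb2
      by_cases hcR : c ∈ R
      · by_cases hcA : c ∈ A
        · -- c ∈ A commutes with both r and ι
          calc c * b = ((c * r) * ι) := by rw [hbeq]; group
          _ = (r * c) * ι := by rw [hAcomm c hcA r hrA]
          _ = r * (c * ι) := by group
          _ = r * (ι * c) := by rw [hιA c hcA]
          _ = b * c := by rw [hbeq]; group
        · -- c ∈ R \ A, so c*c = y and hence r*r = y
          have hcy : c * c = y := hsq c hcR hcA
          have hry : r * r = y := by rw [← hbb, ← hc, hcy]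
          have hrinv : r⁻¹ = r * y := by
            refine inv_eq_of_mul_eq_one_right ?_
            calc r * (r * y) = (r * r) * y := by group
            _ = 1 := by rw [hry, hyy]
          have hcinv : c⁻¹ = y * c := by
            refine inv_eq_of_mul_eq_one_left ?_
            calc (y * c) * c = y * (c * c) := by group
            _ = 1 := by rw [hcy, hyy]
          calc c * b = (c * r) * ι := by rw [hbeq]; group
          _ = (r⁻¹ * c) * ι := by rw [hca c hcR hcA r hrA]
          _ = ((r * y) * c) * ι := by rw [hrinv]
          _ = r * ((y * c) * ι) := by group
          _ = r * (c⁻¹ * ι) := by rw [hcinv]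
          _ = r * (ι * c) := by rw [hιu c hcR hcA]
          _ = b * c := by rw [hbeq]; group
      · -- c ∉ R : c = s * ι with s ∈ R
        have hsR : c * ι ∈ R := hRmul c ι hcR hιR
        set s : B := c * ι with hsdef
        have hceq : c = s * ι := by rw [hsdef, mul_assoc, hιι, mul_one]
        by_cases hsA : s ∈ A
        · -- both b and c lie in A * ι, which is commutative
          calc c * b = s * (ι * r) * ι := by rw [hceq, hbeq]; group
          _ = (s * r) * (ι * ι) := by rw [hιA r hrA]; group
          _ = s * r := by rw [hιι, mul_one]
          _ = r * s := hAcomm s hsA r hrA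
          _ = (r * s) * (ι * ι) := by rw [hιι, mul_one]
          _ = r * (ι * s) * ι := by rw [hιA s hsA]; group
          _ = b * c := by rw [hceq, hbeq]; group
        · -- then c * c = 1, contradicting c * c = b * b ≠ 1
          exfalso
          apply hrr1
          rw [← hbb, ← hc, hceq]
          exact hsq1 s hsR hsA
    · -- b = r * ι with r ∈ R \ A : b is an involution
      left
      rw [hbeq]
      exact hsq1 r hrR hrA
  -- MAIN LEMMA 2: elements of R \ A square to y ≠ 1 and fail to commute with
  -- some square root of their square.
  have main2 : ∀ u ∈ R, u ∉ A →
      u * u = y ∧ ∃ c : B, c * c = u * u ∧ c * u ≠ u * c := by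
    intro u hu huA
    have huy : u * u = y := hsq u hu huA
    refine ⟨huy, ?_⟩
    obtain ⟨w, hwA, hw2⟩ := hexp
    have hww : w * w ≠ 1 := by rw [← pow_two]; exact hw2
    have hxinvA : x⁻¹ ∉ A := fun h => hx (by simpa using inv_mem h)
    obtain ⟨a, haA, hueq⟩ : ∃ a ∈ A, u = a * x :=
      ⟨u * x⁻¹, hAmul u hu x⁻¹ (inv_mem hxR) huA hxinvA, by group⟩
    by_cases haa : a * a = 1
    · -- use c = w * x
      have hainv : a⁻¹ = a := inv_eq_of_mul_eq_one_right haa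
      have hwxR : w * x ∈ R := mul_mem (hALE hwA) hxR
      have hwxA : w * x ∉ A := fun h => hx
        (by have := mul_mem (inv_mem hwA) h; simpa [← mul_assoc] using this)
      refine ⟨w * x, by rw [hsq (w * x) hwxR hwxA, huy], ?_⟩
      intro hcomm
      apply hww
      -- (w*x)*(a*x) = w * a⁻¹ * y, (a*x)*(w*x) = a * w⁻¹ * y
      have h1 : (w * x) * u = (w * a⁻¹) * y := by
        calc (w * x) * u = w * (x * a) * x := by rw [hueq]; group
        _ = w * (a⁻¹ * x) * x := by rw [hxa a haA]
        _ = (w * a⁻¹) * (x * x) := by group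
        _ = (w * a⁻¹) * y := by rw [hxx]
      have h2 : u * (w * x) = (a * w⁻¹) * y := by
        calc u * (w * x) = a * (x * w) * x := by rw [hueq]; group
        _ = a * (w⁻¹ * x) * x := by rw [hxa w hwA]
        _ = (a * w⁻¹) * (x * x) := by group
        _ = (a * w⁻¹) * y := by rw [hxx]
      have h3 : w * a⁻¹ = a * w⁻¹ := by
        have := hcomm
        rw [h1, h2] at this
        exact mul_right_cancel this
      -- deduce w * w = a * a = 1
      have : w * w = a * a := by
        have h4 : (w * a⁻¹) * (a * w) = (a * w⁻¹) * (a * w) := by rw [h3]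
        calc w * w = w * (a⁻¹ * a) * w := by group
        _ = (w * a⁻¹) * (a * w) := by group
        _ = (a * w⁻¹) * (a * w) := by rw [h3]
        _ = a * (w⁻¹ * a) * w := by group
        _ = a * (a * w⁻¹) * w := by rw [hAcomm _ (inv_mem hwA) a haA]
        _ = (a * a) * (w⁻¹ * w) := by group
        _ = a * a := by group
      rw [this, haa]
    · -- use c = x
      refine ⟨x, by rw [hxx, huy], ?_⟩
      intro hcomm
      apply haa
      have h1 : x * u = a⁻¹ * y := by
        calc x * u = (x * a) * x := by rw [hueq]; group
        _ = a⁻¹ * (x * x) := by rw [hxa a haA]; group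
        _ = a⁻¹ * y := by rw [hxx]
      have h2 : u * x = a * y := by
        calc u * x = a * (x * x) := by rw [hueq]; group
        _ = a * y := by rw [hxx]
      have h3 : a⁻¹ = a := by
        have := hcomm
        rw [h1, h2] at this
        exact mul_right_cancel this
      calc a * a = a⁻¹ * a := by rw [h3]
      _ = 1 := by group
  -- every automorphism maps R into R
  have step : ∀ φ : B ≃* B, ∀ u ∈ R, φ u ∈ R := by
    intro φ
    have step1 : ∀ u ∈ R, u ∉ A → φ u ∈ R := by
      intro u hu huA
      by_contra hφu
      obtain ⟨huy, c, hc, hnc⟩ := main2 u hu huA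
      rcases main1 (φ u) hφu with h1 | h2
      · have : u * u = 1 := by
          apply φ.injective
          rw [map_mul, h1, map_one]
        rw [huy] at this
        exact hy1 this
      · apply hnc
        apply φ.injective
        rw [map_mul, map_mul]
        exact h2 (φ c) (by rw [← map_mul, ← map_mul, hc])
    intro u hu
    by_cases huA : u ∈ A
    · have huxA : u * x ∉ A := fun h => hx
        (by have := mul_mem (inv_mem huA) h; simpa [← mul_assoc] using this)
      have h1 : φ (u * x) ∈ R := step1 (u * x) (mul_mem (hALE huA) hxR) huxA
      have h2 : φ x ∈ R := step1 x hxR hx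
      have : φ u = φ (u * x) * (φ x)⁻¹ := by
        rw [← map_inv, ← map_mul, mul_inv_cancel_right]
      rw [this]
      exact mul_mem h1 (inv_mem h2)
    · exact step1 u hu huA
  refine Subgroup.characteristic_iff_comap_eq.2 fun φ => ?_
  ext b
  simp only [Subgroup.mem_comap, MulEquiv.coe_toMonoidHom]
  constructor
  · intro h
    have := step φ.symm (φ b) h
    simpa using this
  · exact step φ b
end

section
/- Let R = Q₈ × E with E an elementary abelian 2-group, and let α_i be the permutation of R swapping ie and -ie for each e ∈ E and fixing all other elements. Then α_i is an automorphism of every Cayley graph Cay(R,S) for every inverse-closed subset S ⊆ R. -/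
/-- Let `R = Q₈ × E` with `E` an elementary abelian 2-group, and let `α_i` be
the permutation of `R` swapping `ie` and `-ie` for each `e ∈ E` (here
`i = a 1`, `-i = a 3` in `QuaternionGroup 2`) and fixing all other elements.
Then `α_i` is an automorphism of the Cayley graph `Cay(R,S)` for every
inverse-closed subset `S ⊆ R`: it preserves adjacency. -/
theorem stmt17 {E : Type*} [CommGroup E] [Fintype E] (hE : ∀ e : E, e ^ 2 = 1)
    (α : Equiv.Perm (QuaternionGroup 2 × E))
    (hα : ∀ p : QuaternionGroup 2 × E,
      α p = if p.1 = QuaternionGroup.a 1 then (QuaternionGroup.a 3, p.2)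
        else if p.1 = QuaternionGroup.a 3 then (QuaternionGroup.a 1, p.2)
        else p)
    (S : Set (QuaternionGroup 2 × E)) (hS : ∀ s ∈ S, s⁻¹ ∈ S) :
    ∀ g h : QuaternionGroup 2 × E, α g * (α h)⁻¹ ∈ S ↔ g * h⁻¹ ∈ S := by
  have hinv : ∀ a : E, a⁻¹ = a := fun a => by
    rw [inv_eq_iff_mul_eq_one, ← sq, hE]
  set F : QuaternionGroup 2 → QuaternionGroup 2 := fun x =>
    if x = QuaternionGroup.a 1 then QuaternionGroup.a 3
    else if x = QuaternionGroup.a 3 then QuaternionGroup.a 1 else x with hF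
  have hαF : ∀ p : QuaternionGroup 2 × E, α p = (F p.1, p.2) := by
    rintro ⟨x, e⟩
    rw [hα, hF]
    by_cases h1 : x = QuaternionGroup.a 1 <;> by_cases h3 : x = QuaternionGroup.a 3 <;>
      simp [h1, h3, show (3:ZMod 4) ≠ 1 by decide]
  have hFkey : ∀ x y : QuaternionGroup 2,
      F x * (F y)⁻¹ = x * y⁻¹ ∨ F x * (F y)⁻¹ = (x * y⁻¹)⁻¹ := by decide
  rintro ⟨g1, e⟩ ⟨h1, f⟩
  rw [hαF, hαF]
  rcases hFkey g1 h1 with hk | hk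
  · simp only [Prod.mk_mul_mk, Prod.inv_mk, hk]
  · simp only [Prod.mk_mul_mk, Prod.inv_mk, hk]
    constructor
    · intro h
      simpa [hinv] using hS _ h
    · intro h
      simpa [hinv] using hS _ h
end

section
/- Let R = Q₈ × E with E an elementary abelian 2-group, M = ⟨-1⟩ × E ≤ R, and B = ⟨R, α_i, α_j, α_k⟩ acting on R (with R acting by right multiplication and α_ℓ the involution swapping ℓe and -ℓe for all e ∈ E). Then M = Z(B), |B : R| = 8, and B has exponent 4. -/
/-- The right regular representation of a group: `g` acts as `v ↦ v * g⁻¹`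
(a homomorphism whose image consists of all right translations). -/
def rightRegular (G : Type*) [Group G] : G →* Equiv.Perm G where
  toFun g := Equiv.mulRight g⁻¹
  map_one' := by ext v; simp
  map_mul' g h := by ext v; simp [mul_assoc]

/-! `B` is the image of `B₀ × E` under `(σ, τ) ↦ σ × τ`, where `B₀ ≤ Sym(Q₈)` is generated
by the right translations and the three swaps `ℓ ↔ -ℓ`. Every element of `B₀` has the normal
form `x ↦ ±x * c`, the sign being constant on the blocks `{±i}, {±j}, {±k}` and `+` on `{±1}`;
computing with these 64 normal forms shows that `|B₀| = 64` and that `B₀` has exponent 4,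
whence `|B| = 64 |E|` and `B` has exponent 4 (as `E` has exponent dividing 2).

For the centre: a permutation commuting with all right translations is a left translation
`x ↦ c * x`, and if it also commutes with the three swaps then `c` is fixed by them, i.e.
`c ∈ ⟨-1⟩ × E = Z(R)`; conversely, right translations by `Z(R)` commute with the swaps. -/

namespace Equiv.Perm

variable (α β : Type*)

def prodCongrHom : Perm α × Perm β →* Perm (α × β) where
  toFun p := p.1.prodCongr p.2
  map_one' := rfl
  map_mul' _ _ := rfl

variable {α β}

@[simp]
lemma prodCongrHom_apply (σ : Perm α) (τ : Perm β) (x : α × β) :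
    prodCongrHom α β (σ, τ) x = (σ x.1, τ x.2) := rfl

lemma prodCongrHom_injective [Nonempty α] [Nonempty β] :
    Function.Injective (prodCongrHom α β) := by
  rintro ⟨σ, τ⟩ ⟨σ', τ'⟩ h
  obtain ⟨x⟩ := ‹Nonempty α›
  obtain ⟨y⟩ := ‹Nonempty β›
  refine Prod.ext (Equiv.ext fun x' => ?_) (Equiv.ext fun y' => ?_)
  · exact congrArg Prod.fst (Equiv.ext_iff.1 h (x', y))
  · exact congrArg Prod.snd (Equiv.ext_iff.1 h (x, y'))

lemma eq_prodCongrHom_swap_one [DecidableEq α] {x y : α} (f : Perm (α × β))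
    (hf : ∀ p, f p = if p.1 = x then (y, p.2) else if p.1 = y then (x, p.2) else p) :
    f = prodCongrHom α β (swap x y, 1) := by
  ext1 p
  rw [hf, prodCongrHom_apply, swap_apply_def]
  split_ifs <;> rfl

end Equiv.Perm

section RightRegular

open Equiv Equiv.Perm Subgroup

variable {G H : Type*} [Group G] [Group H]

lemma rightRegular_apply (g x : G) : rightRegular G g x = x * g⁻¹ := rfl

lemma rightRegular_injective : Function.Injective (rightRegular G) := fun g g' h =>
  inv_injective (by simpa [rightRegular_apply] using congrArg (· 1) h)

lemma rightRegular_prod (g : G × H) :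
    rightRegular (G × H) g = prodCongrHom G H (rightRegular G g.1, rightRegular H g.2) := rfl

lemma eq_mulLeft_of_forall_commute_rightRegular {σ : Perm G}
    (h : ∀ g, Commute σ (rightRegular G g)) : σ = Equiv.mulLeft (σ 1) := by
  ext x
  rw [Equiv.coe_mulLeft]
  simpa only [Perm.mul_apply, rightRegular_apply, inv_inv, one_mul] using
    congrArg (· 1) (h x⁻¹).eq

lemma rightRegular_inv_of_mem_center {c : G} (hc : c ∈ center G) :
    rightRegular G c⁻¹ = Equiv.mulLeft c := by
  ext x
  rw [rightRegular_apply, inv_inv, Equiv.coe_mulLeft, mem_center_iff.1 hc x]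

end RightRegular

namespace Subgroup

lemma map_subtype_center {G : Type*} [Group G] (H : Subgroup G) :
    (center H).map H.subtype = H ⊓ centralizer H := by
  ext x
  simp only [mem_map, mem_inf, mem_centralizer_iff, mem_center_iff, Subtype.forall]
  constructor
  · rintro ⟨⟨x, hx⟩, hc, rfl⟩
    exact ⟨hx, fun g hg => congrArg Subtype.val (hc g hg)⟩
  · rintro ⟨hx, hc⟩
    exact ⟨⟨x, hx⟩, fun g hg => Subtype.ext (hc g hg), rfl⟩

end Subgroup

namespace QuaternionFlip

open Equiv Equiv.Perm Subgroup QuaternionGroup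

local notation "Q₈" => QuaternionGroup 2

-- In `QuaternionGroup 2`: `±1 = a 0, a 2`, `±i = a 1, a 3`, `±j = xa 0, xa 2`, `±k = xa 1, xa 3`.
def blockSwap : Fin 3 → Perm Q₈ := ![swap (a 1) (a 3), swap (xa 0) (xa 2), swap (xa 1) (xa 3)]

def generators : Set (Perm Q₈) := Set.range (rightRegular Q₈) ∪ Set.range blockSwap

def B₀ : Subgroup (Perm Q₈) := closure generators

def ofParam (p : Q₈ × Bool × Bool × Bool) : Perm Q₈ :=
  rightRegular Q₈ p.1 * cond p.2.1 (blockSwap 0) 1 * cond p.2.2.1 (blockSwap 1) 1 *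
    cond p.2.2.2 (blockSwap 2) 1

-- `ofParam p` sends `x` to `±x * p.1⁻¹`, so its parameters can be read off at `1, i, j, k`.
def toParam (σ : Perm Q₈) : Q₈ × Bool × Bool × Bool :=
  ((σ 1)⁻¹, σ (a 1) ≠ a 1 * σ 1, σ (xa 0) ≠ xa 0 * σ 1, σ (xa 1) ≠ xa 1 * σ 1)

lemma toParam_ofParam : ∀ p, toParam (ofParam p) = p := by decide

lemma ofParam_injective : Function.Injective ofParam :=
  Function.LeftInverse.injective toParam_ofParam

set_option maxRecDepth 10000 in
lemma ofParam_toParam_mul_rightRegular : ∀ p q,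
    ofParam (toParam (ofParam p * rightRegular Q₈ q)) = ofParam p * rightRegular Q₈ q := by
  decide

set_option maxRecDepth 10000 in
lemma ofParam_toParam_mul_blockSwap : ∀ p t,
    ofParam (toParam (ofParam p * blockSwap t)) = ofParam p * blockSwap t := by
  decide

set_option maxRecDepth 10000 in
lemma ofParam_pow_four : ∀ p, ofParam p ^ 4 = 1 := by decide

lemma mul_mem_range_ofParam {σ τ : Perm Q₈} (hσ : σ ∈ Set.range ofParam)
    (hτ : τ ∈ generators) : σ * τ ∈ Set.range ofParam := by
  obtain ⟨p, rfl⟩ := hσ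
  refine ⟨toParam (ofParam p * τ), ?_⟩
  rcases hτ with ⟨q, rfl⟩ | ⟨t, rfl⟩
  · exact ofParam_toParam_mul_rightRegular p q
  · exact ofParam_toParam_mul_blockSwap p t

lemma blockSwap_inv : ∀ t, (blockSwap t)⁻¹ = blockSwap t := by decide

lemma inv_mem_generators {τ : Perm Q₈} (hτ : τ ∈ generators) : τ⁻¹ ∈ generators := by
  rcases hτ with ⟨q, rfl⟩ | ⟨t, rfl⟩
  · exact Or.inl ⟨q⁻¹, map_inv _ q⟩
  · exact Or.inr ⟨t, (blockSwap_inv t).symm⟩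

lemma ofParam_mem_B₀ (p : Q₈ × Bool × Bool × Bool) : ofParam p ∈ B₀ := by
  have hcond : ∀ (b : Bool) (t : Fin 3), cond b (blockSwap t) 1 ∈ B₀ := by
    rintro (_ | _) t
    exacts [one_mem _, subset_closure (Or.inr ⟨t, rfl⟩)]
  exact mul_mem (mul_mem (mul_mem (subset_closure (Or.inl ⟨p.1, rfl⟩)) (hcond _ _))
    (hcond _ _)) (hcond _ _)

lemma coe_B₀ : (B₀ : Set (Perm Q₈)) = Set.range ofParam := by
  refine Set.Subset.antisymm (fun σ hσ => ?_) (Set.range_subset_iff.2 ofParam_mem_B₀)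
  induction hσ using closure_induction_right with
  | one => exact ⟨(1, false, false, false), by decide⟩
  | mul_right _ _ _ hτ h => exact mul_mem_range_ofParam h hτ
  | mul_inv_cancel _ _ _ hτ h => exact mul_mem_range_ofParam h (inv_mem_generators hτ)

lemma card_B₀ : Nat.card B₀ = 64 := by
  rw [← SetLike.coe_sort_coe, coe_B₀, Nat.card_range_of_injective ofParam_injective,
    Nat.card_eq_fintype_card]
  rfl

lemma pow_four_of_mem_B₀ {σ : Perm Q₈} (hσ : σ ∈ B₀) : σ ^ 4 = 1 := by
  obtain ⟨p, rfl⟩ : σ ∈ Set.range ofParam := coe_B₀ ▸ hσ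
  exact ofParam_pow_four p

lemma mem_center_iff_eq_one_or_eq_a_two {q : Q₈} : q ∈ center Q₈ ↔ q = 1 ∨ q = a 2 := by
  have key : ∀ q : Q₈, (∀ g : Q₈, g * q = q * g) ↔ q = 1 ∨ q = a 2 := by decide
  exact Subgroup.mem_center_iff.trans (key q)

lemma blockSwap_apply_one : ∀ t, blockSwap t 1 = 1 := by decide

lemma mem_center_of_forall_blockSwap_apply_eq {q : Q₈} (h : ∀ t, blockSwap t q = q) :
    q ∈ center Q₈ := by
  have key : ∀ q : Q₈, (∀ t, blockSwap t q = q) → q = 1 ∨ q = a 2 := by decide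
  exact mem_center_iff_eq_one_or_eq_a_two.2 (key q h)

lemma commute_blockSwap_rightRegular {q : Q₈} (hq : q ∈ center Q₈) (t : Fin 3) :
    Commute (blockSwap t) (rightRegular Q₈ q) := by
  have key : ∀ q : Q₈, (q = 1 ∨ q = a 2) → ∀ t,
      blockSwap t * rightRegular Q₈ q = rightRegular Q₈ q * blockSwap t := by
    decide
  exact key q (mem_center_iff_eq_one_or_eq_a_two.1 hq) t

variable (E : Type*) [CommGroup E]

def extendedGenerators : Set (Perm (Q₈ × E)) :=
  Set.range (rightRegular (Q₈ × E)) ∪ {prodCongrHom Q₈ E (blockSwap 0, 1),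
    prodCongrHom Q₈ E (blockSwap 1, 1), prodCongrHom Q₈ E (blockSwap 2, 1)}

def B : Subgroup (Perm (Q₈ × E)) := closure (extendedGenerators E)

lemma prodCongrHom_blockSwap_mem_extendedGenerators (t : Fin 3) :
    prodCongrHom Q₈ E (blockSwap t, 1) ∈ extendedGenerators E := by
  refine Or.inr ?_
  fin_cases t <;> simp

lemma rightRegular_mem_B (g : Q₈ × E) : rightRegular (Q₈ × E) g ∈ B E :=
  subset_closure (Or.inl ⟨g, rfl⟩)

lemma prodCongrHom_blockSwap_mem_B (t : Fin 3) : prodCongrHom Q₈ E (blockSwap t, 1) ∈ B E :=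
  subset_closure (prodCongrHom_blockSwap_mem_extendedGenerators E t)

variable {E}

lemma B_eq_map_prod : B E = (B₀.prod (rightRegular E).range).map (prodCongrHom Q₈ E) := by
  have hrange : (rightRegular E).range = closure (Set.range (rightRegular E)) := by
    rw [← MonoidHom.coe_range, closure_eq]
  rw [hrange, B₀, ← closure_prod (s := generators) (t := Set.range (rightRegular E))
    (Or.inl ⟨1, map_one _⟩) ⟨1, map_one _⟩, MonoidHom.map_closure, B, extendedGenerators]
  apply le_antisymm <;> rw [closure_le]
  · have hswap : ∀ t, prodCongrHom Q₈ E (blockSwap t, 1) ∈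
        closure (prodCongrHom Q₈ E '' generators ×ˢ Set.range (rightRegular E)) := fun t =>
      subset_closure ⟨(blockSwap t, 1), ⟨Or.inr ⟨t, rfl⟩, ⟨1, map_one _⟩⟩, rfl⟩
    rintro _ (⟨g, rfl⟩ | hs)
    · exact subset_closure ⟨(rightRegular Q₈ g.1, rightRegular E g.2),
        ⟨Or.inl ⟨g.1, rfl⟩, ⟨g.2, rfl⟩⟩, rfl⟩
    · rcases hs with rfl | rfl | rfl
      exacts [hswap 0, hswap 1, hswap 2]
  · rintro _ ⟨⟨_, _⟩, ⟨⟨q, rfl⟩ | ⟨t, rfl⟩, ⟨e, rfl⟩⟩, rfl⟩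
    · exact rightRegular_mem_B E (q, e)
    · have hsplit : prodCongrHom Q₈ E (blockSwap t, rightRegular E e) =
          prodCongrHom Q₈ E (blockSwap t, 1) * rightRegular (Q₈ × E) (1, e) := by
        rw [rightRegular_prod, ← map_mul, Prod.mk_mul_mk, map_one, mul_one, one_mul]
      rw [hsplit]
      exact mul_mem (prodCongrHom_blockSwap_mem_B E t) (rightRegular_mem_B E _)

lemma card_B [Finite E] : Nat.card (B E) = 64 * Nat.card E := by
  rw [B_eq_map_prod, card_map_of_injective prodCongrHom_injective,
    Nat.card_congr (prodEquiv _ _).toEquiv, Nat.card_prod, card_B₀,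
    Nat.card_congr (MonoidHom.ofInjective rightRegular_injective).toEquiv.symm]

lemma relIndex_range_rightRegular_B [Finite E] :
    (rightRegular (Q₈ × E)).range.relIndex (B E) = 8 := by
  have hle : (rightRegular (Q₈ × E)).range ≤ B E := by
    rintro _ ⟨g, rfl⟩
    exact rightRegular_mem_B E g
  have h := relIndex_mul_relIndex ⊥ _ _ bot_le hle
  rw [relIndex_bot_left, relIndex_bot_left, card_B,
    Nat.card_congr (MonoidHom.ofInjective rightRegular_injective).toEquiv.symm,
    Nat.card_prod, Nat.card_eq_fintype_card (α := Q₈), QuaternionGroup.card] at h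
  have hE : 0 < Nat.card E := Nat.card_pos
  exact Nat.eq_of_mul_eq_mul_left (by positivity : 0 < 4 * 2 * Nat.card E) (by linarith)

lemma pow_four_of_mem_B (hE : ∀ e : E, e ^ 2 = 1) {x : Perm (Q₈ × E)} (hx : x ∈ B E) :
    x ^ 4 = 1 := by
  rw [B_eq_map_prod] at hx
  obtain ⟨⟨σ, _⟩, ⟨hσ, ⟨e, rfl⟩⟩, rfl⟩ := hx
  rw [← map_pow, Prod.pow_mk, pow_four_of_mem_B₀ hσ, ← map_pow,
    show 4 = 2 * 2 from rfl, pow_mul, hE, map_one]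
  rfl

lemma exponent_B (hE : ∀ e : E, e ^ 2 = 1) : Monoid.exponent (B E) = 4 := by
  refine Nat.dvd_antisymm (Monoid.exponent_dvd_of_forall_pow_eq_one fun x =>
    Subtype.ext (pow_four_of_mem_B hE x.2)) ?_
  let x : B E := ⟨rightRegular (Q₈ × E) (a 1, 1), rightRegular_mem_B E _⟩
  have hx : orderOf x = 4 := by
    rw [← orderOf_coe, orderOf_injective _ rightRegular_injective, Prod.orderOf_mk,
      orderOf_a_one, orderOf_one]
    rfl
  exact hx ▸ Monoid.order_dvd_exponent x

lemma closure_eq_center :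
    closure ({((a 2 : Q₈), (1 : E))} ∪ Set.range fun e : E => ((1 : Q₈), e)) =
      center (Q₈ × E) := by
  set S : Set (Q₈ × E) := {((a 2 : Q₈), (1 : E))} ∪ Set.range fun e : E => ((1 : Q₈), e)
  have hS : ∀ e : E, ((1 : Q₈), e) ∈ closure S := fun e =>
    subset_closure (Or.inr ⟨e, rfl⟩)
  rw [Subgroup.center_prod, CommGroup.center_eq_top]
  apply le_antisymm
  · rw [closure_le]
    rintro _ (rfl | ⟨e, rfl⟩)
    · exact ⟨mem_center_iff_eq_one_or_eq_a_two.2 (Or.inr rfl), trivial⟩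
    · exact ⟨one_mem _, trivial⟩
  · rintro ⟨q, e⟩ ⟨hq, -⟩
    rcases mem_center_iff_eq_one_or_eq_a_two.1 hq with rfl | rfl
    · exact hS e
    · rw [show ((a 2 : Q₈), e) = ((a 2 : Q₈), (1 : E)) * ((1 : Q₈), e) by simp]
      exact mul_mem (subset_closure (Or.inl rfl)) (hS e)

lemma commute_prodCongrHom_blockSwap_rightRegular {m : Q₈ × E} (hm : m ∈ center (Q₈ × E))
    (t : Fin 3) : Commute (prodCongrHom Q₈ E (blockSwap t, 1)) (rightRegular (Q₈ × E) m) := by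
  rw [Subgroup.center_prod] at hm
  rw [rightRegular_prod]
  exact (Commute.prod (commute_blockSwap_rightRegular hm.1 t) (Commute.one_left _)).map _

lemma exists_mem_center_eq_mulLeft {x : Perm (Q₈ × E)}
    (hx : ∀ g ∈ extendedGenerators E, g * x = x * g) :
    ∃ c ∈ center (Q₈ × E), x = Equiv.mulLeft c := by
  refine ⟨x 1, ?_, eq_mulLeft_of_forall_commute_rightRegular fun g =>
    (hx _ (Or.inl ⟨g, rfl⟩)).symm⟩
  have hfix : ∀ t, blockSwap t (x 1).1 = (x 1).1 := fun t => by
    have h1 : prodCongrHom Q₈ E (blockSwap t, 1) 1 = 1 := by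
      ext <;> simp [blockSwap_apply_one]
    simpa [h1] using congrArg (fun y => (y 1).1)
      (hx _ (prodCongrHom_blockSwap_mem_extendedGenerators E t))
  rw [Subgroup.center_prod, CommGroup.center_eq_top]
  exact ⟨mem_center_of_forall_blockSwap_apply_eq hfix, trivial⟩

lemma map_subtype_center_B :
    (center (B E)).map (B E).subtype = (center (Q₈ × E)).map (rightRegular (Q₈ × E)) := by
  rw [map_subtype_center, B, centralizer_closure, ← B]
  ext x
  simp only [mem_inf, mem_centralizer_iff, mem_map]
  constructor
  · rintro ⟨-, hx⟩
    obtain ⟨c, hc, rfl⟩ := exists_mem_center_eq_mulLeft hx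
    exact ⟨c⁻¹, inv_mem hc, rightRegular_inv_of_mem_center hc⟩
  · rintro ⟨m, hm, rfl⟩
    refine ⟨rightRegular_mem_B E m, ?_⟩
    rintro _ (⟨g, rfl⟩ | hs)
    · rw [← map_mul, ← map_mul, mem_center_iff.1 hm g]
    · rcases hs with rfl | rfl | rfl
      exacts [(commute_prodCongrHom_blockSwap_rightRegular hm 0).eq,
        (commute_prodCongrHom_blockSwap_rightRegular hm 1).eq,
        (commute_prodCongrHom_blockSwap_rightRegular hm 2).eq]

end QuaternionFlip

/-- Let `R = Q₈ × E` with `E` an elementary abelian 2-group,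
`M = ⟨-1⟩ × E ≤ R`, and `B = ⟨R, α_i, α_j, α_k⟩ ≤ Sym(R)`, where `R` acts on
itself by right multiplication and, in `QuaternionGroup 2`, `i = a 1`,
`-1 = a 2`, `j = xa 0`, `k = xa 1`, so that `α_i` swaps `(a 1, e) ↔ (a 3, e)`,
`α_j` swaps `(xa 0, e) ↔ (xa 2, e)` and `α_k` swaps `(xa 1, e) ↔ (xa 3, e)`.
Then `M = Z(B)`, `|B : R| = 8`, and `B` has exponent 4. -/
theorem stmt19 {E : Type*} [CommGroup E] [Fintype E] (hE : ∀ e : E, e ^ 2 = 1)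
    (αi αj αk : Equiv.Perm (QuaternionGroup 2 × E))
    (hαi : ∀ p : QuaternionGroup 2 × E,
      αi p = if p.1 = QuaternionGroup.a 1 then (QuaternionGroup.a 3, p.2)
        else if p.1 = QuaternionGroup.a 3 then (QuaternionGroup.a 1, p.2)
        else p)
    (hαj : ∀ p : QuaternionGroup 2 × E,
      αj p = if p.1 = QuaternionGroup.xa 0 then (QuaternionGroup.xa 2, p.2)
        else if p.1 = QuaternionGroup.xa 2 then (QuaternionGroup.xa 0, p.2)
        else p)
    (hαk : ∀ p : QuaternionGroup 2 × E,
      αk p = if p.1 = QuaternionGroup.xa 1 then (QuaternionGroup.xa 3, p.2)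
        else if p.1 = QuaternionGroup.xa 3 then (QuaternionGroup.xa 1, p.2)
        else p)
    (M : Subgroup (QuaternionGroup 2 × E))
    (hM : M = Subgroup.closure ({(QuaternionGroup.a 2, (1 : E))} ∪
      Set.range fun e : E => ((1 : QuaternionGroup 2), e)))
    (Bgrp : Subgroup (Equiv.Perm (QuaternionGroup 2 × E)))
    (hB : Bgrp = Subgroup.closure
      (Set.range (rightRegular (QuaternionGroup 2 × E)) ∪ {αi, αj, αk})) :
    (Subgroup.center Bgrp).map Bgrp.subtype =
        M.map (rightRegular (QuaternionGroup 2 × E)) ∧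
      Subgroup.relIndex (rightRegular (QuaternionGroup 2 × E)).range Bgrp = 8 ∧
      Monoid.exponent Bgrp = 4 := by
  obtain rfl := Equiv.Perm.eq_prodCongrHom_swap_one αi hαi
  obtain rfl := Equiv.Perm.eq_prodCongrHom_swap_one αj hαj
  obtain rfl := Equiv.Perm.eq_prodCongrHom_swap_one αk hαk
  subst hM hB
  rw [QuaternionFlip.closure_eq_center]
  exact ⟨QuaternionFlip.map_subtype_center_B, QuaternionFlip.relIndex_range_rightRegular_B,
    QuaternionFlip.exponent_B hE⟩
end
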